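/- arXiv:1704.05421 — 8 statements merged into one kernel-verified Lean document; each statement's English description precedes it below -/
import Mathlib

section
/- For any n×n complex matrix A, the absolute value of its determinant is at most the product of the Euclidean norms of its columns: |det A| ≤ ∏_{j=1}^n (∑_{i=1}^n |A i j|²)^{1/2}. -/
private theorem hadamard_aux {n : ℕ} (A : Matrix (Fin (n+1)) (Fin (n+1)) ℂ) :
    ‖A.det‖ ≤ ∏ j, Real.sqrt (∑ i, ‖A i j‖ ^ 2) := by
  classical
  haveI : WellFoundedLT (Fin (n+1)) := inferInstance
  have hcard : Module.finrank ℂ (EuclideanSpace ℂ (Fin (n+1))) = Fintype.card (Fin (n+1)) := by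
    simp
  set f : Fin (n+1) → EuclideanSpace ℂ (Fin (n+1)) := fun j => WithLp.toLp 2 (fun i => A i j : Fin (n+1) → ℂ)
    with hf
  set e : OrthonormalBasis (Fin (n+1)) ℂ (EuclideanSpace ℂ (Fin (n+1))) :=
    EuclideanSpace.basisFun (Fin (n+1)) ℂ with he
  set b : OrthonormalBasis (Fin (n+1)) ℂ (EuclideanSpace ℂ (Fin (n+1))) :=
    InnerProductSpace.gramSchmidtOrthonormalBasis (𝕜 := ℂ) hcard f with hb
  have hMat : e.toBasis.toMatrix f = A := by
    ext i j
    simp [Module.Basis.toMatrix_apply, e, f, EuclideanSpace.basisFun]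
  have hdetA : A.det = e.toBasis.det f := by
    rw [Module.Basis.det_apply, hMat]
  have hmul : e.toBasis.toMatrix b.toBasis * b.toBasis.toMatrix f = e.toBasis.toMatrix f :=
    Module.Basis.toMatrix_mul_toMatrix _ _ _
  have hnorm : ‖e.toBasis.det f‖ = ‖b.toBasis.det f‖ := by
    rw [Module.Basis.det_apply, Module.Basis.det_apply, ← hmul, Matrix.det_mul, norm_mul]
    have h1 : ‖(e.toBasis.toMatrix b.toBasis).det‖ = 1 := by
      have := e.det_to_matrix_orthonormalBasis b
      rwa [Module.Basis.det_apply] at this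
    rw [h1, one_mul]
  have hdet : b.toBasis.det f = ∏ i, (inner ℂ (b i) (f i) : ℂ) :=
    InnerProductSpace.gramSchmidtOrthonormalBasis_det (𝕜 := ℂ) hcard f
  have hbound : ‖b.toBasis.det f‖ ≤ ∏ j, ‖f j‖ := by
    rw [hdet, norm_prod]
    apply Finset.prod_le_prod (fun i _ => norm_nonneg _)
    intro i _
    calc ‖(inner ℂ (b i) (f i) : ℂ)‖ ≤ ‖b i‖ * ‖f i‖ := norm_inner_le_norm _ _
      _ = ‖f i‖ := by rw [b.orthonormal.1 i, one_mul]
  have hfnorm : ∀ j, ‖f j‖ = Real.sqrt (∑ i, ‖A i j‖ ^ 2) := by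
    intro j
    rw [EuclideanSpace.norm_eq]
  calc ‖A.det‖ = ‖A.det‖ := rfl
    _ = ‖b.toBasis.det f‖ := by rw [hdetA, hnorm]
    _ ≤ ∏ j, ‖f j‖ := hbound
    _ = ∏ j, Real.sqrt (∑ i, ‖A i j‖ ^ 2) :=
        Finset.prod_congr rfl fun j _ => hfnorm j

/-- **Hadamard's inequality (column form).** For any `n × n` complex matrix `A`, the
absolute value of its determinant is at most the product of the Euclidean norms of its
columns. -/
theorem abs_det_le_prod_column_norms {n : ℕ} (A : Matrix (Fin n) (Fin n) ℂ) :
    ‖A.det‖ ≤ ∏ j, Real.sqrt (∑ i, ‖A i j‖ ^ 2) := by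
  cases n with
  | zero => simp [Matrix.det_fin_zero]
  | succ m => exact hadamard_aux A
end

section
/- Let A be a positive definite n×n complex matrix and let α₁, …, α_k be pairwise disjoint subsets of the index set {1,…,n}. Then det(A[α₁ ∪ ⋯ ∪ α_k]) ≤ ∏_{i=1}^k det(A[α_i]), where A[β] denotes the principal submatrix of A with rows and columns indexed by β. Equality holds if and only if A s t = 0 for every pair of indices s ∈ α_i and t ∈ α_j with i ≠ j. -/
open scoped ComplexOrder

/-- The principal submatrix of `A` with rows and columns indexed by the subset `β`. -/
def principalSubmatrix {n : ℕ} (A : Matrix (Fin n) (Fin n) ℂ) (β : Finset (Fin n)) :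
    Matrix β β ℂ :=
  A.submatrix (fun s : β => (s : Fin n)) (fun t : β => (t : Fin n))

open Matrix

lemma posDef_submatrix_inj {m n : Type*} [Fintype m] [Fintype n] [DecidableEq m] [DecidableEq n]
    {M : Matrix n n ℂ} (hM : M.PosDef) {e : m → n} (he : Function.Injective e) :
    (M.submatrix e e).PosDef := by
  set P : Matrix n m ℂ := (1 : Matrix n n ℂ).submatrix id e with hP
  have key : M.submatrix e e = Pᴴ * M * P := by
    ext s t
    simp [P, Matrix.mul_apply, Matrix.one_apply, Finset.sum_ite_eq, apply_ite]
  refine Matrix.PosDef.of_dotProduct_mulVec_pos ?_ ?_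
  · exact key ▸ isHermitian_conjTranspose_mul_mul P hM.1
  · intro x hx
    rw [key]
    have hPx : P *ᵥ x ≠ 0 := by
      intro h
      apply hx
      funext s
      have := congrFun h (e s)
      simpa [P, Matrix.mulVec, dotProduct, Matrix.one_apply, he.eq_iff,
        Finset.sum_ite_eq'] using this
    simpa only [star_mulVec, dotProduct_mulVec, vecMul_vecMul] using hM.dotProduct_mulVec_pos hPx

lemma det_one_add_psd {m : Type*} [Fintype m] [DecidableEq m]
    {T : Matrix m m ℂ} (hT : T.PosSemidef) :
    1 ≤ (1 + T).det ∧ ((1 + T).det = 1 ↔ T = 0) := by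
  have h1 := hT.1
  set U : Matrix m m ℂ := (h1.eigenvectorUnitary : Matrix m m ℂ) with hU
  have hUU : U * star U = 1 := (Matrix.mem_unitaryGroup_iff).mp h1.eigenvectorUnitary.2
  set D : Matrix m m ℂ := Matrix.diagonal (RCLike.ofReal ∘ h1.eigenvalues) with hD
  have hspec : T = U * D * star U := h1.spectral_theorem
  have hsum : 1 + T = U * (1 + D) * star U := by
    rw [hspec, Matrix.mul_add, Matrix.add_mul, Matrix.mul_one, hUU]
  have hdetU : U.det * (star U).det = 1 := by rw [← Matrix.det_mul, hUU, Matrix.det_one]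
  have hdet : (1 + T).det = (1 + D).det := by
    rw [hsum, Matrix.det_mul, Matrix.det_mul]
    calc U.det * (1 + D).det * (star U).det
        = (1 + D).det * (U.det * (star U).det) := by ring
      _ = (1 + D).det := by rw [hdetU, mul_one]
  have hDdiag : (1 : Matrix m m ℂ) + D = Matrix.diagonal (fun i => 1 + (h1.eigenvalues i : ℂ)) := by
    rw [hD, ← Matrix.diagonal_one, Matrix.diagonal_add]
    rfl
  have hev : ∀ i, 0 ≤ h1.eigenvalues i := hT.eigenvalues_nonneg
  have hdet2 : (1 + T).det = ((∏ i, (1 + h1.eigenvalues i) : ℝ) : ℂ) := by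
    rw [hdet, hDdiag, Matrix.det_diagonal]
    push_cast
    rfl
  have haux : ∀ s : Finset m, (1 : ℝ) ≤ ∏ i ∈ s, (1 + h1.eigenvalues i) := by
    intro s
    calc (1:ℝ) = ∏ _i ∈ s, (1:ℝ) := by simp
      _ ≤ ∏ i ∈ s, (1 + h1.eigenvalues i) :=
        Finset.prod_le_prod (by simp) (fun i _ => by linarith [hev i])
  have hr : (1 : ℝ) ≤ ∏ i, (1 + h1.eigenvalues i) := haux Finset.univ
  constructor
  · rw [hdet2]
    exact_mod_cast hr
  · rw [hdet2]
    constructor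
    · intro h
      have hre : (∏ i, (1 + h1.eigenvalues i) : ℝ) = 1 := by exact_mod_cast h
      have hev0 : ∀ i, h1.eigenvalues i = 0 := by
        intro i
        have hsplit := Finset.mul_prod_erase Finset.univ (fun i => 1 + h1.eigenvalues i)
          (Finset.mem_univ i)
        have herase := haux (Finset.univ.erase i)
        rw [hre] at hsplit
        nlinarith [hev i, mul_le_mul_of_nonneg_left herase
          (by linarith [hev i] : (0:ℝ) ≤ 1 + h1.eigenvalues i)]
      have hD0 : D = 0 := by
        rw [hD]
        ext i j
        by_cases hij : i = j <;> simp [Matrix.diagonal, hij, hev0]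
      rw [hspec, hD0, Matrix.mul_zero, Matrix.zero_mul]
    · intro h
      rw [← hdet2, h]
      simp

open scoped MatrixOrder in
lemma det_le_det_add_psd {m : Type*} [Fintype m] [DecidableEq m]
    {N S : Matrix m m ℂ} (hN : N.PosDef) (hS : S.PosSemidef) :
    N.det ≤ (N + S).det ∧ ((N + S).det = N.det ↔ S = 0) := by
  set Q := CFC.sqrt N with hQdef
  have hQpsd : Q.PosSemidef := (CFC.sqrt_nonneg N).posSemidef
  have hQQ : Q * Q = N := CFC.sqrt_mul_sqrt_self N hN.posSemidef.nonneg
  have hdN : 0 < N.det := hN.det_pos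
  have hQN : Q.det * Q.det = N.det := by rw [← Matrix.det_mul, hQQ]
  have hdQ : IsUnit Q.det := by
    refine isUnit_iff_ne_zero.mpr fun h => ?_
    rw [h, mul_zero] at hQN
    exact hdN.ne' hQN.symm
  have hQi : Q * Q⁻¹ = 1 := Matrix.mul_nonsing_inv Q hdQ
  have hiQ : Q⁻¹ * Q = 1 := Matrix.nonsing_inv_mul Q hdQ
  set T : Matrix m m ℂ := Q⁻¹ * S * Q⁻¹ with hTdef
  have hThm : (Q⁻¹)ᴴ = Q⁻¹ := by rw [Matrix.conjTranspose_nonsing_inv, hQpsd.1]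
  have hTpsd : T.PosSemidef := by
    have := hS.conjTranspose_mul_mul_same Q⁻¹
    rwa [hThm] at this
  have hQTQ : Q * T * Q = S := by
    rw [hTdef]
    calc Q * (Q⁻¹ * S * Q⁻¹) * Q = (Q * Q⁻¹) * S * (Q⁻¹ * Q) := by
          simp only [Matrix.mul_assoc]
      _ = S := by rw [hQi, hiQ, Matrix.one_mul, Matrix.mul_one]
  have hsum : N + S = Q * (1 + T) * Q := by
    rw [Matrix.mul_add, Matrix.add_mul, Matrix.mul_one, hQQ, hQTQ]
  have hdet : (N + S).det = N.det * (1 + T).det := by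
    rw [hsum, Matrix.det_mul, Matrix.det_mul]
    calc Q.det * (1 + T).det * Q.det = (Q.det * Q.det) * (1 + T).det := by ring
      _ = N.det * (1 + T).det := by rw [hQN]
  obtain ⟨h1, h2⟩ := det_one_add_psd hTpsd
  constructor
  · calc N.det = N.det * 1 := (mul_one _).symm
      _ ≤ N.det * (1 + T).det := mul_le_mul_of_nonneg_left h1 hdN.le
      _ = (N + S).det := hdet.symm
  · rw [hdet]
    constructor
    · intro h
      have hone : (1 + T).det = 1 :=
        mul_left_cancel₀ hdN.ne' (by rw [mul_one]; exact h)
      rw [← hQTQ, h2.mp hone, Matrix.mul_zero, Matrix.zero_mul]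
    · intro h
      have hT0 : T = 0 := by rw [hTdef, h, Matrix.mul_zero, Matrix.zero_mul]
      rw [h2.mpr hT0, mul_one]

lemma posDef_of_posSemidef_det_ne_zero {m : Type*} [Fintype m] [DecidableEq m]
    {N : Matrix m m ℂ} (hN : N.PosSemidef) (hd : N.det ≠ 0) : N.PosDef := by
  refine .of_dotProduct_mulVec_pos hN.1 fun x hx => ?_
  refine lt_of_le_of_ne (hN.dotProduct_mulVec_nonneg x) fun h => ?_
  have h0 : N *ᵥ x = 0 := (hN.dotProduct_mulVec_zero_iff x).mp h.symm
  have hinj : Function.Injective (N.mulVec) :=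
    mulVec_injective_iff_isUnit.mpr (isUnit_iff_isUnit_det _ |>.mpr (isUnit_iff_ne_zero.mpr hd))
  exact hx (hinj (by rw [h0, Matrix.mulVec_zero]))

lemma fischer_two_block {p q : Type*} [Fintype p] [DecidableEq p] [Fintype q] [DecidableEq q]
    {A : Matrix p p ℂ} {B : Matrix p q ℂ} {D : Matrix q q ℂ}
    (h : (Matrix.fromBlocks A B Bᴴ D).PosDef) :
    (Matrix.fromBlocks A B Bᴴ D).det ≤ A.det * D.det ∧
      ((Matrix.fromBlocks A B Bᴴ D).det = A.det * D.det ↔ B = 0) := by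
  have hA : A.PosDef := by
    have := posDef_submatrix_inj h (Sum.inl_injective (α := p) (β := q))
    exact this
  have hD : D.PosDef := by
    have := posDef_submatrix_inj h (Sum.inr_injective (α := p) (β := q))
    exact this
  have hAu : IsUnit A.det := isUnit_iff_ne_zero.mpr hA.det_pos.ne'
  haveI : Invertible A := A.invertibleOfIsUnitDet hAu
  have hdet : (Matrix.fromBlocks A B Bᴴ D).det = A.det * (D - Bᴴ * A⁻¹ * B).det := by
    rw [Matrix.det_fromBlocks₁₁, Matrix.invOf_eq_nonsing_inv]
  set S : Matrix q q ℂ := Bᴴ * A⁻¹ * B with hSdef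
  have hSpsd : S.PosSemidef := hA.inv.posSemidef.conjTranspose_mul_mul_same B
  set N : Matrix q q ℂ := D - S with hNdef
  have hDN : D = N + S := by rw [hNdef]; abel
  have hNpsd : N.PosSemidef := by
    rw [hNdef, hSdef]
    exact (PosDef.fromBlocks₁₁ B D hA).mp h.posSemidef
  have hNd : N.det ≠ 0 := by
    intro h0
    have : (Matrix.fromBlocks A B Bᴴ D).det = 0 := by
      rw [hdet, h0, mul_zero]
    exact h.det_pos.ne' this
  have hNpd : N.PosDef := posDef_of_posSemidef_det_ne_zero hNpsd hNd
  obtain ⟨hle, heq⟩ := det_le_det_add_psd hNpd hSpsd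
  have hS0B : S = 0 ↔ B = 0 := by
    constructor
    · intro hS0
      have hBv : ∀ x : q → ℂ, B *ᵥ x = 0 := by
        intro x
        by_contra hBx
        have hpos := hA.inv.dotProduct_mulVec_pos hBx
        have : star x ⬝ᵥ S *ᵥ x = star (B *ᵥ x) ⬝ᵥ A⁻¹ *ᵥ (B *ᵥ x) := by
          rw [hSdef]
          simp only [star_mulVec, Matrix.dotProduct_mulVec, Matrix.vecMul_vecMul]
        rw [hS0] at this
        simp only [Matrix.zero_mulVec, dotProduct_zero] at this
        exact hpos.ne' this.symm
      ext i j
      have := congrFun (hBv (Pi.single j 1)) i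
      simpa [Matrix.mulVec_single] using this
    · intro hB0
      rw [hSdef, hB0]
      simp
  constructor
  · rw [hdet, hDN]
    exact mul_le_mul_of_nonneg_left hle hA.det_pos.le
  · rw [hdet, hDN, ← hS0B]
    constructor
    · intro hEq
      exact heq.mp (mul_left_cancel₀ hA.det_pos.ne' hEq).symm
    · intro hS0
      rw [heq.mpr hS0]

lemma fischer_step {n : ℕ} {A : Matrix (Fin n) (Fin n) ℂ} (hA : A.PosDef)
    {β γ : Finset (Fin n)} (hd : Disjoint β γ) :
    (principalSubmatrix A (β ∪ γ)).det
        ≤ (principalSubmatrix A β).det * (principalSubmatrix A γ).det ∧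
      ((principalSubmatrix A (β ∪ γ)).det
          = (principalSubmatrix A β).det * (principalSubmatrix A γ).det ↔
        ∀ s ∈ β, ∀ t ∈ γ, A s t = 0) := by
  classical
  set e : β ⊕ γ → Fin n := Sum.elim (fun s => (s : Fin n)) (fun t => (t : Fin n)) with he_def
  have he : Function.Injective e := by
    rintro (s | s) (t | t) h <;> simp only [e, Sum.elim_inl, Sum.elim_inr] at h
    · exact congrArg Sum.inl (Subtype.ext h)
    · exact absurd (h ▸ s.2) (Finset.disjoint_left.mp hd · t.2)
    · exact absurd (h ▸ t.2) (fun hh => Finset.disjoint_left.mp hd hh s.2)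
    · exact congrArg Sum.inr (Subtype.ext h)
  set B : Matrix β γ ℂ := A.submatrix (fun s : β => (s : Fin n)) (fun t : γ => (t : Fin n))
    with hB_def
  have hM : A.submatrix e e
      = Matrix.fromBlocks (principalSubmatrix A β) B Bᴴ (principalSubmatrix A γ) := by
    ext i j
    rcases i with s | s <;> rcases j with t | t <;>
      simp [e, principalSubmatrix, hB_def, Matrix.fromBlocks, Matrix.conjTranspose_apply]
    exact (hA.1.apply _ _).symm
  have hMpd : (Matrix.fromBlocks (principalSubmatrix A β) B Bᴴ
      (principalSubmatrix A γ)).PosDef := hM ▸ posDef_submatrix_inj hA he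
  -- the equivalence between β ⊕ γ and β ∪ γ
  have hmem : ∀ x : β ⊕ γ, e x ∈ β ∪ γ := by
    rintro (s | s) <;> simp [e, Finset.mem_union, s.2]
  set f : β ⊕ γ ≃ {x // x ∈ β ∪ γ} :=
    { toFun := fun x => ⟨e x, hmem x⟩
      invFun := fun x => if h' : (x : Fin n) ∈ β then Sum.inl ⟨x, h'⟩ else
        Sum.inr ⟨x, by
          have := x.2
          rw [Finset.mem_union] at this
          tauto⟩
      left_inv := by
        rintro (s | s)
        · simp [e, s.2]
        · have : (s : Fin n) ∉ β := fun hh => Finset.disjoint_left.mp hd hh s.2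
          simp [e, this]
      right_inv := by
        intro x
        by_cases h' : (x : Fin n) ∈ β <;> simp [e, h'] } with hf_def
  have hdet_eq : (A.submatrix e e).det = (principalSubmatrix A (β ∪ γ)).det := by
    have : A.submatrix e e = (principalSubmatrix A (β ∪ γ)).submatrix f f := rfl
    rw [this, Matrix.det_submatrix_equiv_self]
  obtain ⟨hle, heq⟩ := fischer_two_block hMpd
  rw [← hM, hdet_eq] at hle heq
  refine ⟨hle, heq.trans ?_⟩
  constructor
  · intro h0 s hs t ht
    exact congrFun (congrFun h0 ⟨s, hs⟩) ⟨t, ht⟩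
  · intro h0
    ext s t
    exact h0 s s.2 t t.2

lemma pS_det_pos {n : ℕ} {A : Matrix (Fin n) (Fin n) ℂ} (hA : A.PosDef) (β : Finset (Fin n)) :
    0 < (principalSubmatrix A β).det :=
  (posDef_submatrix_inj hA (Subtype.coe_injective (p := fun x => x ∈ β))).det_pos

/-- **Fischer's inequality.** If `A` is a positive definite `n × n` complex matrix and
`α 1, …, α k` are pairwise disjoint subsets of the index set, then
`det (A[α 1 ∪ ⋯ ∪ α k]) ≤ ∏ i, det (A[α i])`, with equality iff all the entries of `A`
with row index in some `α i` and column index in some `α j` with `i ≠ j` vanish. -/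
theorem fischer_det_inequality {n k : ℕ} {A : Matrix (Fin n) (Fin n) ℂ} (hA : A.PosDef)
    (α : Fin k → Finset (Fin n)) (hdisj : ∀ i j : Fin k, i ≠ j → Disjoint (α i) (α j)) :
    (principalSubmatrix A (Finset.univ.biUnion α)).det
        ≤ ∏ i, (principalSubmatrix A (α i)).det ∧
      ((principalSubmatrix A (Finset.univ.biUnion α)).det
          = ∏ i, (principalSubmatrix A (α i)).det ↔
        ∀ i j : Fin k, i ≠ j → ∀ s ∈ α i, ∀ t ∈ α j, A s t = 0) := by
  induction k with
  | zero =>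
    have h0 : (Finset.univ.biUnion α) = (∅ : Finset (Fin n)) := by simp
    rw [h0]
    haveI : IsEmpty ((∅ : Finset (Fin n)) : Finset (Fin n)) := by
      simp only [Finset.isEmpty_coe_sort]
    constructor
    · simp [Matrix.det_isEmpty]
    · simp [Matrix.det_isEmpty]
  | succ k ih =>
    set β := α 0 with hβ
    set γ := Finset.univ.biUnion (fun i : Fin k => α i.succ) with hγ
    have hunion : Finset.univ.biUnion α = β ∪ γ := by
      ext x
      simp [hβ, hγ, Fin.exists_fin_succ]
    have hdγ : Disjoint β γ := by
      rw [hγ, Finset.disjoint_biUnion_right]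
      exact fun i _ => hdisj 0 i.succ (Fin.succ_ne_zero i).symm
    have hdisj' : ∀ i j : Fin k, i ≠ j → Disjoint (α i.succ) (α j.succ) :=
      fun i j hij => hdisj i.succ j.succ (fun h => hij (Fin.succ_injective _ h))
    obtain ⟨ihle, iheq⟩ := ih (fun i => α i.succ) hdisj'
    obtain ⟨sle, seq⟩ := fischer_step hA hdγ
    have hprod : ∏ i, (principalSubmatrix A (α i)).det
        = (principalSubmatrix A β).det * ∏ i : Fin k, (principalSubmatrix A (α i.succ)).det :=
      Fin.prod_univ_succ _
    have ha : 0 < (principalSubmatrix A β).det := pS_det_pos hA β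
    have hb : 0 < (principalSubmatrix A γ).det := pS_det_pos hA γ
    rw [hunion, hprod]
    constructor
    · calc (principalSubmatrix A (β ∪ γ)).det
          ≤ (principalSubmatrix A β).det * (principalSubmatrix A γ).det := sle
        _ ≤ (principalSubmatrix A β).det * ∏ i : Fin k, (principalSubmatrix A (α i.succ)).det :=
          mul_le_mul_of_nonneg_left ihle ha.le
    · constructor
      · intro hEq
        -- equality forces both intermediate equalities
        have h1 : (principalSubmatrix A β).det * (principalSubmatrix A γ).det
            = (principalSubmatrix A β).det * ∏ i : Fin k, (principalSubmatrix A (α i.succ)).det := by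
          refine le_antisymm (mul_le_mul_of_nonneg_left ihle ha.le) ?_
          rw [← hEq]
          exact sle
        have h2 : (principalSubmatrix A γ).det
            = ∏ i : Fin k, (principalSubmatrix A (α i.succ)).det :=
          mul_left_cancel₀ ha.ne' h1
        have h3 : (principalSubmatrix A (β ∪ γ)).det
            = (principalSubmatrix A β).det * (principalSubmatrix A γ).det := by
          rw [hEq, h1]
        have hcross := seq.mp h3
        have hrest := iheq.mp h2
        intro i j hij s hs t ht
        rcases Fin.eq_zero_or_eq_succ i with hi | ⟨i', rfl⟩
        · rcases Fin.eq_zero_or_eq_succ j with hj | ⟨j', rfl⟩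
          · exact absurd (hi.trans hj.symm) hij
          · subst hi
            refine hcross s hs t ?_
            rw [hγ, Finset.mem_biUnion]
            exact ⟨j', Finset.mem_univ _, ht⟩
        · rcases Fin.eq_zero_or_eq_succ j with hj | ⟨j', rfl⟩
          · subst hj
            have hts : A t s = 0 := by
              refine hcross t ht s ?_
              rw [hγ, Finset.mem_biUnion]
              exact ⟨i', Finset.mem_univ _, hs⟩
            have := hA.1.apply s t
            rw [← this, hts, star_zero]
          · exact hrest i' j' (fun h => hij (congrArg Fin.succ h)) s hs t ht
      · intro h0
        have hcross : ∀ s ∈ β, ∀ t ∈ γ, A s t = 0 := by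
          intro s hs t ht
          rw [hγ, Finset.mem_biUnion] at ht
          obtain ⟨j, _, htj⟩ := ht
          exact h0 0 j.succ (Fin.succ_ne_zero j).symm s hs t htj
        have hrest : ∀ i j : Fin k, i ≠ j → ∀ s ∈ α i.succ, ∀ t ∈ α j.succ, A s t = 0 :=
          fun i j hij => h0 i.succ j.succ (fun h => hij (Fin.succ_injective _ h))
        rw [seq.mpr hcross, iheq.mpr hrest]
end

section
/- In the block setting, let C : Matrix J J ℂ be positive definite and let D : Matrix J J ℂ be block diagonal and positive semidefinite, with principal diagonal blocks C_i and D_i respectively. Then ∏_{i} det(C_i + D_i)/det(C_i) ≤ det(C + D)/det(C). (Each C_i is positive definite, so all the determinants appearing in the denominators are positive reals, and C + D and C_i + D_i are positive definite so all determinants are positive reals.) -/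
open scoped ComplexOrder

set_option linter.unusedSectionVars false
set_option linter.unusedTactic false
set_option linter.unnecessarySeqFocus false
set_option maxHeartbeats 1000000

/-- The `i`-th principal diagonal block of a matrix indexed by the disjoint-union index
type `(i : Fin k) × Fin (n i)`. -/
def diagBlock {k : ℕ} {n : Fin k → ℕ}
    (C : Matrix ((i : Fin k) × Fin (n i)) ((i : Fin k) × Fin (n i)) ℂ) (i : Fin k) :
    Matrix (Fin (n i)) (Fin (n i)) ℂ :=
  fun a b => C ⟨i, a⟩ ⟨i, b⟩

/-- A matrix indexed by the disjoint-union index type is block diagonal if all entries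
outside the principal diagonal blocks vanish. -/
def IsBlockDiagonal {k : ℕ} {n : Fin k → ℕ}
    (C : Matrix ((i : Fin k) × Fin (n i)) ((i : Fin k) × Fin (n i)) ℂ) : Prop :=
  ∀ p q : (i : Fin k) × Fin (n i), p.1 ≠ q.1 → C p q = 0

/-- The pinching of a matrix indexed by the disjoint-union index type: the block diagonal
matrix with the same principal diagonal blocks. -/
def pinch {k : ℕ} {n : Fin k → ℕ}
    (C : Matrix ((i : Fin k) × Fin (n i)) ((i : Fin k) × Fin (n i)) ℂ) :
    Matrix ((i : Fin k) × Fin (n i)) ((i : Fin k) × Fin (n i)) ℂ :=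
  fun p q => if p.1 = q.1 then C p q else 0


namespace Matrix.PosSemidef

open scoped MatrixOrder

noncomputable def sqrt {m : Type*} [Fintype m] [DecidableEq m] {A : Matrix m m ℂ}
    (_hA : A.PosSemidef) : Matrix m m ℂ := CFC.sqrt A

lemma posSemidef_sqrt {m : Type*} [Fintype m] [DecidableEq m] {A : Matrix m m ℂ}
    (hA : A.PosSemidef) : hA.sqrt.PosSemidef :=
  Matrix.nonneg_iff_posSemidef.mp (CFC.sqrt_nonneg A)

lemma sqrt_mul_self {m : Type*} [Fintype m] [DecidableEq m] {A : Matrix m m ℂ}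
    (hA : A.PosSemidef) : hA.sqrt * hA.sqrt = A :=
  CFC.sqrt_mul_sqrt_self A (Matrix.nonneg_iff_posSemidef.mpr hA)

end Matrix.PosSemidef

namespace MaticAux

open Matrix

variable {m l J : Type*} [Fintype m] [DecidableEq m] [Fintype l] [DecidableEq l]
  [Fintype J] [DecidableEq J]


/-- a positive complex number is its real part -/
lemma creal {z : ℂ} (h : 0 < z) : z = (z.re : ℂ) ∧ 0 < z.re := by
  have h' := Complex.lt_def.mp h
  exact ⟨Complex.ext rfl h'.2.symm, by simpa using h'.1⟩

lemma cdiv_pos {z w : ℂ} (hz : 0 < z) (hw : 0 < w) : 0 < z / w := by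
  obtain ⟨hz1, hz2⟩ := creal hz
  obtain ⟨hw1, hw2⟩ := creal hw
  rw [hz1, hw1, ← Complex.ofReal_div]
  exact_mod_cast div_pos hz2 hw2

lemma cdiv_le_cdiv_right {x y z : ℂ} (h : x ≤ y) (hz : 0 < z) : x / z ≤ y / z := by
  obtain ⟨hz1, hz2⟩ := creal hz
  have hinv : (0:ℂ) ≤ z⁻¹ := by
    rw [hz1, ← Complex.ofReal_inv]
    exact_mod_cast le_of_lt (inv_pos.mpr hz2)
  rw [div_eq_mul_inv, div_eq_mul_inv]
  exact mul_le_mul_of_nonneg_right h hinv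

/-- congruence by a mulVec-injective matrix preserves positive definiteness -/
lemma posDef_conj {M : Matrix J J ℂ} (hM : M.PosDef) (B : Matrix J m ℂ)
    (hB : ∀ x, B *ᵥ x = 0 → x = 0) : (Bᴴ * M * B).PosDef := by
  refine Matrix.PosDef.of_dotProduct_mulVec_pos ?_ ?_
  · have : (Bᴴ * M * B)ᴴ = Bᴴ * M * B := by
      simp [Matrix.conjTranspose_mul, Matrix.mul_assoc, hM.1.eq]
    exact this
  · intro x hx
    have hBx : B *ᵥ x ≠ 0 := fun h => hx (hB x h)
    have := hM.dotProduct_mulVec_pos hBx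
    simpa only [star_mulVec, Matrix.dotProduct_mulVec, Matrix.vecMul_vecMul] using this

lemma posDef_submatrix_inj {M : Matrix J J ℂ} (hM : M.PosDef) (e : m → J)
    (he : Function.Injective e) : (M.submatrix e e).PosDef := by
  let B : Matrix J m ℂ := Matrix.submatrix 1 id e
  have h1 : M.submatrix e e = Bᴴ * M * B := by
    rw [(by simp : M = 1 * M * 1), Matrix.submatrix_mul (he₂ := Function.bijective_id),
      Matrix.submatrix_mul (he₂ := Function.bijective_id), Matrix.submatrix_id_id]
    simp only [B, Matrix.conjTranspose_submatrix, Matrix.conjTranspose_one]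
    simp [Matrix.mul_assoc]
  rw [h1]
  refine posDef_conj hM B fun x h => ?_
  funext a
  have := congrFun h (e a)
  simp only [Matrix.mulVec, dotProduct, B, Matrix.submatrix_apply, id_eq,
    Matrix.one_apply] at this
  rw [Finset.sum_eq_single a] at this
  · simpa using this
  · intro b _ hb
    simp [he.ne (Ne.symm hb) ]
  · simp

lemma det_one_add_psd {X : Matrix m m ℂ} (hX : X.PosSemidef) :
    (1:ℂ) ≤ (1 + X).det := by
  have hU : (hX.1.eigenvectorUnitary : Matrix m m ℂ) * star (hX.1.eigenvectorUnitary : Matrix m m ℂ) = 1 :=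
    Matrix.mem_unitaryGroup_iff.mp hX.1.eigenvectorUnitary.2
  have h1 : 1 + X = (hX.1.eigenvectorUnitary : Matrix m m ℂ) *
      (1 + Matrix.diagonal ((RCLike.ofReal ∘ hX.1.eigenvalues) : m → ℂ)) *
      star (hX.1.eigenvectorUnitary : Matrix m m ℂ) := by
    rw [Matrix.mul_add, Matrix.mul_one, Matrix.add_mul, hU]
    congr 1
    exact hX.1.spectral_theorem
  have h2 : (1 + X).det = (1 + Matrix.diagonal ((RCLike.ofReal ∘ hX.1.eigenvalues) : m → ℂ)).det := by
    rw [h1, Matrix.det_mul, Matrix.det_mul]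
    have h3 : (hX.1.eigenvectorUnitary : Matrix m m ℂ).det *
        (star (hX.1.eigenvectorUnitary : Matrix m m ℂ)).det = 1 := by
      rw [← Matrix.det_mul, hU, Matrix.det_one]
    calc (hX.1.eigenvectorUnitary : Matrix m m ℂ).det *
          (1 + Matrix.diagonal ((RCLike.ofReal ∘ hX.1.eigenvalues) : m → ℂ)).det *
          (star (hX.1.eigenvectorUnitary : Matrix m m ℂ)).det
        = ((hX.1.eigenvectorUnitary : Matrix m m ℂ).det *
            (star (hX.1.eigenvectorUnitary : Matrix m m ℂ)).det) *
          (1 + Matrix.diagonal ((RCLike.ofReal ∘ hX.1.eigenvalues) : m → ℂ)).det := by ring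
      _ = _ := by rw [h3, one_mul]
  rw [h2, ← Matrix.diagonal_one, Matrix.diagonal_add, Matrix.det_diagonal]
  calc (1:ℂ) = ∏ _i : m, (1:ℂ) := by simp
  _ ≤ _ := by
    refine Finset.prod_le_prod (fun i _ => zero_le_one) (fun i _ => ?_)
    simp only [Pi.add_apply, Pi.one_apply, Function.comp_apply]
    refine le_add_of_nonneg_right ?_
    rw [RCLike.nonneg_iff]
    constructor
    · simpa using hX.eigenvalues_nonneg i
    · simp

lemma det_mono {S T : Matrix m m ℂ} (hS : S.PosDef) (hTS : (T - S).PosSemidef) :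
    S.det ≤ T.det := by
  set G := T - S with hG
  have hT : T = S + G := by rw [hG]; abel
  set R := hS.posSemidef.sqrt with hR
  have hRR : R * R = S := hS.posSemidef.sqrt_mul_self
  have hRH : R.IsHermitian := hS.posSemidef.posSemidef_sqrt.1
  have hdetS : (0:ℂ) < S.det := hS.det_pos
  have hdetR : IsUnit R.det := by
    have : R.det * R.det = S.det := by rw [← Matrix.det_mul, hRR]
    have h0 : R.det ≠ 0 := fun h => by simp [h] at this; exact hdetS.ne' this.symm
    exact IsUnit.mk0 _ h0
  have hRinv : R * R⁻¹ = 1 := Matrix.mul_nonsing_inv R hdetR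
  have hRinv' : R⁻¹ * R = 1 := Matrix.nonsing_inv_mul R hdetR
  have hRiH : (R⁻¹)ᴴ = R⁻¹ := by
    rw [Matrix.conjTranspose_nonsing_inv, hRH.eq]
  set X := R⁻¹ * G * R⁻¹ with hX
  have hXpsd : X.PosSemidef := by
    have := hTS.conjTranspose_mul_mul_same (R⁻¹)
    rwa [hRiH] at this
  have hTdecomp : T = R * (1 + X) * R := by
    rw [Matrix.mul_add, Matrix.add_mul, Matrix.mul_one, hRR, hX]
    rw [show R * (R⁻¹ * G * R⁻¹) * R = (R * R⁻¹) * G * (R⁻¹ * R) by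
      simp only [Matrix.mul_assoc]]
    rw [hRinv, hRinv', Matrix.one_mul, Matrix.mul_one, hT]
  have hdet : T.det = S.det * (1 + X).det := by
    rw [hTdecomp, Matrix.det_mul, Matrix.det_mul, mul_comm, ← mul_assoc, ← Matrix.det_mul, hRR]
  rw [hdet]
  calc S.det = S.det * 1 := by ring
  _ ≤ S.det * (1 + X).det :=
      mul_le_mul_of_nonneg_left (det_one_add_psd hXpsd) hdetS.le

lemma sylvester_ratio {C D : Matrix m m ℂ} (hC : C.PosDef) (hD : D.PosSemidef) :
    (C + D).det = C.det * (1 + hD.sqrt * C⁻¹ * hD.sqrt).det := by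
  have hCinv : C * C⁻¹ = 1 := Matrix.mul_nonsing_inv C hC.det_pos.ne'.isUnit
  have h1 : C + D = C * (1 + C⁻¹ * D) := by
    rw [Matrix.mul_add, Matrix.mul_one, ← Matrix.mul_assoc, hCinv, Matrix.one_mul]
  rw [h1, Matrix.det_mul]
  congr 1
  have hDs : hD.sqrt * hD.sqrt = D := hD.sqrt_mul_self
  rw [show C⁻¹ * D = (C⁻¹ * hD.sqrt) * hD.sqrt by rw [Matrix.mul_assoc, hDs]]
  rw [Matrix.det_one_add_mul_comm, Matrix.mul_assoc]


lemma eigenvalues_ge_one {M : Matrix m m ℂ} (hM : M.PosDef) (h1 : (M - 1).PosSemidef)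
    (i : m) : 1 ≤ hM.1.eigenvalues i := by
  set v := ⇑(hM.1.eigenvectorBasis i) with hv
  have hvne : v ≠ 0 := by
    simpa [hv] using (hM.1.eigenvectorBasis.orthonormal.ne_zero i)
  have hs : (0:ℂ) < dotProduct (star v) v := by
    have := (Matrix.PosDef.one (n := m) (R := ℂ)).dotProduct_mulVec_pos hvne
    simpa using this
  obtain ⟨hs1, hs2⟩ := creal hs
  have hMv : M *ᵥ v = hM.1.eigenvalues i • v := hM.1.mulVec_eigenvectorBasis i
  have key : (0:ℂ) ≤ (Complex.ofReal (hM.1.eigenvalues i - 1)) * dotProduct (star v) v := by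
    have h0 := h1.dotProduct_mulVec_nonneg v
    rw [Matrix.sub_mulVec, dotProduct_sub, Matrix.one_mulVec, hMv] at h0
    have : dotProduct (star v) (hM.1.eigenvalues i • v) =
        (Complex.ofReal (hM.1.eigenvalues i)) * dotProduct (star v) v := by
      rw [dotProduct_smul]
      simp [Complex.real_smul]
    rw [this] at h0
    convert h0 using 1
    push_cast
    ring
  rw [hs1, ← Complex.ofReal_mul] at key
  have key' : (0:ℝ) ≤ (hM.1.eigenvalues i - 1) * (dotProduct (star v) v).re := by
    exact_mod_cast key
  by_contra hlt
  push_neg at hlt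
  have : (hM.1.eigenvalues i - 1) * (dotProduct (star v) v).re < 0 :=
    mul_neg_of_neg_of_pos (by linarith) hs2
  linarith

lemma one_sub_inv_psd {M : Matrix m m ℂ} (hM : M.PosDef) (h1 : (M - 1).PosSemidef) :
    ((1:Matrix m m ℂ) - M⁻¹).PosSemidef := by
  set U : Matrix m m ℂ := (hM.1.eigenvectorUnitary : Matrix m m ℂ) with hUdef
  have hU : U * star U = 1 := Matrix.mem_unitaryGroup_iff.mp hM.1.eigenvectorUnitary.2
  have hU' : star U * U = 1 := Matrix.mem_unitaryGroup_iff'.mp hM.1.eigenvectorUnitary.2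
  have hspec : M = U * Matrix.diagonal ((RCLike.ofReal ∘ hM.1.eigenvalues) : m → ℂ) * star U :=
    hM.1.spectral_theorem
  have hevpos : ∀ i, 0 < hM.1.eigenvalues i := fun i => hM.eigenvalues_pos i
  set d' : m → ℂ := fun i => (Complex.ofReal (hM.1.eigenvalues i))⁻¹ with hd'
  have hMinv : M⁻¹ = U * Matrix.diagonal d' * star U := by
    refine (Matrix.inv_eq_right_inv ?_)
    rw [hspec]
    calc U * Matrix.diagonal ((RCLike.ofReal ∘ hM.1.eigenvalues) : m → ℂ) * star U *
          (U * Matrix.diagonal d' * star U)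
        = U * (Matrix.diagonal ((RCLike.ofReal ∘ hM.1.eigenvalues) : m → ℂ) *
            (star U * U) * Matrix.diagonal d') * star U := by
          simp only [Matrix.mul_assoc]
      _ = 1 := by
          rw [hU', Matrix.mul_one, Matrix.diagonal_mul_diagonal]
          have : (fun i => ((RCLike.ofReal ∘ hM.1.eigenvalues) : m → ℂ) i * d' i) = fun _ => (1:ℂ) := by
            funext i
            simp only [Function.comp_apply, hd']
            exact mul_inv_cancel₀ (Complex.ofReal_ne_zero.mpr (hevpos i).ne')
          rw [this, Matrix.diagonal_one, Matrix.mul_one, hU]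
  have hsub : (1:Matrix m m ℂ) - M⁻¹ = U * Matrix.diagonal (fun i => 1 - d' i) * star U := by
    rw [hMinv]
    have h1' : (1:Matrix m m ℂ) = U * 1 * star U := by rw [Matrix.mul_one, hU]
    calc (1:Matrix m m ℂ) - U * Matrix.diagonal d' * star U
        = U * 1 * star U - U * Matrix.diagonal d' * star U := by rw [← h1']
      _ = U * (1 - Matrix.diagonal d') * star U := by
          rw [Matrix.mul_sub, Matrix.sub_mul]
      _ = _ := by
          rw [← Matrix.diagonal_one, Matrix.diagonal_sub]
  rw [hsub]
  have hdiag : (Matrix.diagonal (fun i => 1 - d' i)).PosSemidef := by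
    refine Matrix.posSemidef_diagonal_iff.mpr fun i => ?_
    have h1le := eigenvalues_ge_one hM h1 i
    have : (1:ℂ) - d' i = Complex.ofReal (1 - (hM.1.eigenvalues i)⁻¹) := by
      simp only [hd']
      push_cast
      ring
    rw [this]
    have hr : (0:ℝ) ≤ 1 - (hM.1.eigenvalues i)⁻¹ := by
      have : (hM.1.eigenvalues i)⁻¹ ≤ 1 := by
        rw [inv_le_one_iff₀]
        right; linarith
      linarith
    exact_mod_cast hr
  have := hdiag.mul_mul_conjTranspose_same U
  rwa [← Matrix.star_eq_conjTranspose] at this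

lemma inv_antitone {S C : Matrix m m ℂ} (hS : S.PosDef) (hC : C.PosDef)
    (hCS : (C - S).PosSemidef) : (S⁻¹ - C⁻¹).PosSemidef := by
  set R := hS.posSemidef.sqrt with hRdef
  have hRR : R * R = S := hS.posSemidef.sqrt_mul_self
  have hRH : R.IsHermitian := hS.posSemidef.posSemidef_sqrt.1
  have hdetS : (0:ℂ) < S.det := hS.det_pos
  have hdetR : IsUnit R.det := by
    have h : R.det * R.det = S.det := by rw [← Matrix.det_mul, hRR]
    exact IsUnit.mk0 _ (fun h0 => by simp [h0] at h; exact hdetS.ne' h.symm)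
  have hRinv : R * R⁻¹ = 1 := Matrix.mul_nonsing_inv R hdetR
  have hRinv' : R⁻¹ * R = 1 := Matrix.nonsing_inv_mul R hdetR
  have hRiH : (R⁻¹)ᴴ = R⁻¹ := by rw [Matrix.conjTranspose_nonsing_inv, hRH.eq]
  have hRinj : ∀ x : m → ℂ, R⁻¹ *ᵥ x = 0 → x = 0 := by
    intro x hx
    have : R *ᵥ (R⁻¹ *ᵥ x) = 0 := by rw [hx, Matrix.mulVec_zero]
    rwa [Matrix.mulVec_mulVec, hRinv, Matrix.one_mulVec] at this
  set M := R⁻¹ * C * R⁻¹ with hMdef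
  have hMpd : M.PosDef := by
    have := posDef_conj hC (R⁻¹) hRinj
    rwa [hRiH] at this
  have hM1 : (M - 1).PosSemidef := by
    have key : M - 1 = (R⁻¹)ᴴ * (C - S) * R⁻¹ := by
      rw [hRiH, hMdef, Matrix.mul_sub, Matrix.sub_mul]
      congr 1
      rw [show R⁻¹ * S * R⁻¹ = R⁻¹ * (R * R) * R⁻¹ by rw [hRR]]
      rw [show R⁻¹ * (R * R) * R⁻¹ = (R⁻¹ * R) * (R * R⁻¹) by simp only [Matrix.mul_assoc]]
      rw [hRinv, hRinv', Matrix.one_mul]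
    rw [key]
    exact hCS.conjTranspose_mul_mul_same (R⁻¹)
  have hMinv : M⁻¹ = R * C⁻¹ * R := by
    refine Matrix.inv_eq_right_inv ?_
    rw [hMdef]
    calc R⁻¹ * C * R⁻¹ * (R * C⁻¹ * R)
        = R⁻¹ * (C * ((R⁻¹ * R) * C⁻¹)) * R := by simp only [Matrix.mul_assoc]
      _ = 1 := by
          rw [hRinv', Matrix.one_mul, Matrix.mul_nonsing_inv C hC.det_pos.ne'.isUnit,
            Matrix.mul_one, hRinv']
  have h1M : ((1:Matrix m m ℂ) - M⁻¹).PosSemidef := one_sub_inv_psd hMpd hM1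
  have hfin : S⁻¹ - C⁻¹ = (R⁻¹)ᴴ * ((1:Matrix m m ℂ) - M⁻¹) * R⁻¹ := by
    rw [hRiH, hMinv, Matrix.mul_sub, Matrix.sub_mul, Matrix.mul_one]
    have hSinv : S⁻¹ = R⁻¹ * R⁻¹ := by
      refine Matrix.inv_eq_right_inv ?_
      rw [← hRR]
      calc R * R * (R⁻¹ * R⁻¹) = R * (R * R⁻¹) * R⁻¹ := by simp only [Matrix.mul_assoc]
        _ = 1 := by rw [hRinv, Matrix.mul_one, hRinv]
    rw [hSinv]
    congr 1
    rw [show R⁻¹ * (R * C⁻¹ * R) * R⁻¹ = (R⁻¹ * R) * C⁻¹ * (R * R⁻¹) by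
      simp only [Matrix.mul_assoc]]
    rw [hRinv, hRinv', Matrix.one_mul, Matrix.mul_one]
  rw [hfin]
  exact h1M.conjTranspose_mul_mul_same (R⁻¹)

lemma ratio_antitone {S C D : Matrix m m ℂ} (hS : S.PosDef) (hC : C.PosDef)
    (hD : D.PosSemidef) (hCS : (C - S).PosSemidef) :
    (C + D).det / C.det ≤ (S + D).det / S.det := by
  have hCe := sylvester_ratio hC hD
  have hSe := sylvester_ratio hS hD
  have hCd : C.det ≠ 0 := hC.det_pos.ne'
  have hSd : S.det ≠ 0 := hS.det_pos.ne'
  rw [hCe, hSe, mul_div_cancel_left₀ _ hCd, mul_div_cancel_left₀ _ hSd]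
  set Q := hD.sqrt with hQdef
  have hQH : Qᴴ = Q := hD.posSemidef_sqrt.1
  have hCpd : (1 + Q * C⁻¹ * Q).PosDef := by
    refine Matrix.PosDef.one.add_posSemidef ?_
    have := hC.inv.posSemidef.conjTranspose_mul_mul_same Q
    rwa [hQH] at this
  refine det_mono hCpd ?_
  have : (1 + Q * S⁻¹ * Q) - (1 + Q * C⁻¹ * Q) = Qᴴ * (S⁻¹ - C⁻¹) * Q := by
    rw [hQH, Matrix.mul_sub, Matrix.sub_mul]
    abel
  rw [this]
  exact (inv_antitone hS hC hCS).conjTranspose_mul_mul_same Q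


lemma posDef_schur {A : Matrix m m ℂ} {B : Matrix m l ℂ} {E : Matrix l l ℂ}
    (h : (Matrix.fromBlocks A B Bᴴ E).PosDef) (hA : A.PosDef) :
    (E - Bᴴ * A⁻¹ * B).PosDef := by
  haveI : Invertible A := A.invertibleOfIsUnitDet hA.det_pos.ne'.isUnit
  refine Matrix.PosDef.of_dotProduct_mulVec_pos ?_ ?_
  · exact (Matrix.IsHermitian.fromBlocks₁₁ B E hA.1).mp h.1
  · intro y hy
    have hz : (Sum.elim (-((A⁻¹ * B) *ᵥ y)) y) ≠ 0 := by
      intro h0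
      apply hy
      funext j
      exact congrFun h0 (Sum.inr j)
    have hpos := h.dotProduct_mulVec_pos hz
    have heq := Matrix.schur_complement_eq₁₁ B E (-((A⁻¹ * B) *ᵥ y)) y hA.1
    rw [Matrix.dotProduct_mulVec, heq, neg_add_cancel] at hpos
    simp only [star_zero, Matrix.zero_vecMul, zero_dotProduct, zero_add] at hpos
    rwa [← Matrix.dotProduct_mulVec] at hpos



open Matrix

def blockEquiv {k : ℕ} {n : Fin (k+1) → ℕ} :
    (Fin (n 0) ⊕ ((i : Fin k) × Fin (n i.succ))) ≃ ((i : Fin (k+1)) × Fin (n i)) where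
  toFun := Sum.elim (fun a => ⟨0, a⟩) (fun p => ⟨p.1.succ, p.2⟩)
  invFun := fun p => Fin.cases
    (motive := fun j => Fin (n j) → (Fin (n 0) ⊕ ((i : Fin k) × Fin (n i.succ))))
    (fun a => Sum.inl a) (fun i a => Sum.inr ⟨i, a⟩) p.1 p.2
  left_inv := by rintro (a | ⟨i, a⟩) <;> simp
  right_inv := by
    rintro ⟨i, a⟩
    induction i using Fin.cases <;> simp

lemma key : ∀ (k : ℕ) (n : Fin k → ℕ)
    (C D : Matrix ((i : Fin k) × Fin (n i)) ((i : Fin k) × Fin (n i)) ℂ),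
    C.PosDef → D.PosSemidef → IsBlockDiagonal D →
    ∏ i, (diagBlock C i + diagBlock D i).det / (diagBlock C i).det ≤ (C + D).det / C.det := by
  intro k
  induction k with
  | zero =>
    intro n C D hC hD hbd
    haveI : IsEmpty ((i : Fin 0) × Fin (n i)) := ⟨fun p => p.1.elim0⟩
    simp [Matrix.det_isEmpty]
  | succ k ih =>
    intro n C D hC hD hbd
    set n' : Fin k → ℕ := fun i => n i.succ with hn'
    set e : (Fin (n 0) ⊕ ((i : Fin k) × Fin (n' i))) ≃ ((i : Fin (k+1)) × Fin (n i)) :=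
      blockEquiv with he
    set A : Matrix (Fin (n 0)) (Fin (n 0)) ℂ := diagBlock C 0 with hA_def
    set Bm : Matrix (Fin (n 0)) ((i : Fin k) × Fin (n' i)) ℂ :=
      fun a p => C ⟨0, a⟩ ⟨p.1.succ, p.2⟩ with hBm_def
    set Em : Matrix ((i : Fin k) × Fin (n' i)) ((i : Fin k) × Fin (n' i)) ℂ :=
      fun p q => C ⟨p.1.succ, p.2⟩ ⟨q.1.succ, q.2⟩ with hEm_def
    set D₁ : Matrix (Fin (n 0)) (Fin (n 0)) ℂ := diagBlock D 0 with hD₁_def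
    set D₂ : Matrix ((i : Fin k) × Fin (n' i)) ((i : Fin k) × Fin (n' i)) ℂ :=
      fun p q => D ⟨p.1.succ, p.2⟩ ⟨q.1.succ, q.2⟩ with hD₂_def
    -- Hermitian entries
    have hherm : ∀ x y, C x y = star (C y x) := fun x y => (hC.1.apply x y).symm
    have hCeq : C.submatrix e e = Matrix.fromBlocks A Bm Bmᴴ Em := by
      ext x y
      cases x with
      | inl a =>
        cases y with
        | inl b => rfl
        | inr q => rfl
      | inr p =>
        cases y with
        | inl b =>
          show C ⟨p.1.succ, p.2⟩ ⟨0, b⟩ = Bmᴴ p b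
          rw [Matrix.conjTranspose_apply]
          exact hherm _ _
        | inr q => rfl
    have hDeq : D.submatrix e e = Matrix.fromBlocks D₁ 0 0 D₂ := by
      ext x y
      cases x with
      | inl a =>
        cases y with
        | inl b => rfl
        | inr q =>
          show D ⟨0, a⟩ ⟨q.1.succ, q.2⟩ = 0
          exact hbd _ _ (by simp [(Fin.succ_ne_zero q.1).symm])
      | inr p =>
        cases y with
        | inl b =>
          show D ⟨p.1.succ, p.2⟩ ⟨0, b⟩ = 0
          exact hbd _ _ (by simp [Fin.succ_ne_zero p.1])
        | inr q => rfl
    -- positive definiteness of blocks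
    have hCblk : ∀ i : Fin (k+1), (diagBlock C i).PosDef :=
      fun i => posDef_submatrix_inj hC (fun a => (⟨i, a⟩ : (j : Fin (k+1)) × Fin (n j)))
        (sigma_mk_injective (β := fun j => Fin (n j)) (i := i))
    have hDblk : ∀ i : Fin (k+1), (diagBlock D i).PosSemidef :=
      fun i => hD.submatrix (fun a => (⟨i, a⟩ : (j : Fin (k+1)) × Fin (n j)))
    have hA : A.PosDef := hCblk 0
    have hD₁ : D₁.PosSemidef := hDblk 0
    have hD₂ : D₂.PosSemidef := by
      have h := hD.submatrix (fun p : (i : Fin k) × Fin (n' i) =>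
        (⟨p.1.succ, p.2⟩ : (j : Fin (k + 1)) × Fin (n j)))
      exact h
    have hAD₁ : (A + D₁).PosDef := hA.add_posSemidef hD₁
    haveI : Invertible A := A.invertibleOfIsUnitDet hA.det_pos.ne'.isUnit
    haveI : Invertible (A + D₁) := (A + D₁).invertibleOfIsUnitDet hAD₁.det_pos.ne'.isUnit
    have hC' : (Matrix.fromBlocks A Bm Bmᴴ Em).PosDef := by
      rw [← hCeq]; exact posDef_submatrix_inj hC e e.injective
    set S : Matrix ((i : Fin k) × Fin (n' i)) ((i : Fin k) × Fin (n' i)) ℂ :=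
      Em - Bmᴴ * A⁻¹ * Bm with hS_def
    have hS : S.PosDef := posDef_schur hC' hA
    -- determinants
    have hdetC : C.det = A.det * S.det := by
      rw [← Matrix.det_submatrix_equiv_self e C, hCeq, Matrix.det_fromBlocks₁₁,
        Matrix.invOf_eq_nonsing_inv]
    have hCDeq : (C + D).submatrix e e =
        Matrix.fromBlocks (A + D₁) Bm Bmᴴ (Em + D₂) := by
      have hsplit : (C + D).submatrix ⇑e ⇑e = C.submatrix ⇑e ⇑e + D.submatrix ⇑e ⇑e := rfl
      rw [hsplit, hCeq, hDeq, Matrix.fromBlocks_add]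
      congr 1 <;> simp
    set W : Matrix ((i : Fin k) × Fin (n' i)) ((i : Fin k) × Fin (n' i)) ℂ :=
      Em + D₂ - Bmᴴ * (A + D₁)⁻¹ * Bm with hW_def
    have hdetCD : (C + D).det = (A + D₁).det * W.det := by
      rw [← Matrix.det_submatrix_equiv_self e (C + D), hCDeq, Matrix.det_fromBlocks₁₁,
        Matrix.invOf_eq_nonsing_inv]
    -- the gap
    have hgap : (W - (S + D₂)).PosSemidef := by
      have h1 : W - (S + D₂) = Bmᴴ * (A⁻¹ - (A + D₁)⁻¹) * Bm := by
        rw [Matrix.mul_sub, Matrix.sub_mul, hW_def, hS_def]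
        abel
      rw [h1]
      have h2 : (A⁻¹ - (A + D₁)⁻¹).PosSemidef := by
        refine inv_antitone hA hAD₁ ?_
        rw [add_sub_cancel_left]
        exact hD₁
      exact h2.conjTranspose_mul_mul_same Bm
    have hSD₂ : (S + D₂).PosDef := hS.add_posSemidef hD₂
    have hdetW : (S + D₂).det ≤ W.det := det_mono hSD₂ hgap
    -- block diagonal structure of D₂
    have hD₂bd : IsBlockDiagonal D₂ := by
      intro p q hpq
      exact hbd ⟨p.1.succ, p.2⟩ ⟨q.1.succ, q.2⟩
        (fun h => hpq (Fin.succ_injective _ h))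
    -- induction hypothesis
    have hIH := ih n' S D₂ hS hD₂ hD₂bd
    -- per-block comparison
    have hblock : ∀ i : Fin k,
        (diagBlock C i.succ + diagBlock D i.succ).det / (diagBlock C i.succ).det ≤
        (diagBlock S i + diagBlock D₂ i).det / (diagBlock S i).det := by
      intro i
      have hSi : (diagBlock S i).PosDef :=
        posDef_submatrix_inj hS (fun a => (⟨i, a⟩ : (j : Fin k) × Fin (n' j)))
          (sigma_mk_injective (β := fun j => Fin (n' j)) (i := i))
      have hCi : (diagBlock C i.succ).PosDef := hCblk i.succ
      have hDi : (diagBlock D i.succ).PosSemidef := hDblk i.succ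
      have hdiff : (diagBlock C i.succ - diagBlock S i).PosSemidef := by
        have hP : (Bmᴴ * A⁻¹ * Bm).PosSemidef := by
          have := hA.inv.posSemidef.conjTranspose_mul_mul_same Bm
          exact this
        have hP2 : (diagBlock (Bmᴴ * A⁻¹ * Bm) i).PosSemidef :=
          hP.submatrix (fun a => (⟨i, a⟩ : (j : Fin k) × Fin (n' j)))
        have heq2 : diagBlock C i.succ - diagBlock S i = diagBlock (Bmᴴ * A⁻¹ * Bm) i := by
          ext a b
          show C ⟨i.succ, a⟩ ⟨i.succ, b⟩ - S ⟨i, a⟩ ⟨i, b⟩ = (Bmᴴ * A⁻¹ * Bm) ⟨i, a⟩ ⟨i, b⟩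
          rw [hS_def]
          show _ - (Em ⟨i, a⟩ ⟨i, b⟩ - (Bmᴴ * A⁻¹ * Bm) ⟨i, a⟩ ⟨i, b⟩) = _
          show C ⟨i.succ, a⟩ ⟨i.succ, b⟩ -
            (C ⟨i.succ, a⟩ ⟨i.succ, b⟩ - (Bmᴴ * A⁻¹ * Bm) ⟨i, a⟩ ⟨i, b⟩) = _
          ring
        rw [heq2]
        exact hP2
      have h := ratio_antitone hSi hCi hDi hdiff
      have e1 : diagBlock D₂ i = diagBlock D i.succ := rfl
      rw [e1]
      exact h
    -- ratios are nonnegative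
    have hratio_nonneg : ∀ i : Fin (k+1),
        (0:ℂ) ≤ (diagBlock C i + diagBlock D i).det / (diagBlock C i).det := fun i =>
      (cdiv_pos ((hCblk i).add_posSemidef (hDblk i)).det_pos (hCblk i).det_pos).le
    -- assemble
    rw [Fin.prod_univ_succ]
    have hstep1 : ∏ i : Fin k,
        (diagBlock C i.succ + diagBlock D i.succ).det / (diagBlock C i.succ).det ≤
        (S + D₂).det / S.det := by
      refine le_trans (Finset.prod_le_prod (fun i _ => hratio_nonneg i.succ)
        (fun i _ => hblock i)) hIH
    have hstep2 : (S + D₂).det / S.det ≤ W.det / S.det :=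
      cdiv_le_cdiv_right hdetW hS.det_pos
    have hr0 : (0:ℂ) ≤ (diagBlock C 0 + diagBlock D 0).det / (diagBlock C 0).det :=
      hratio_nonneg 0
    calc (diagBlock C 0 + diagBlock D 0).det / (diagBlock C 0).det *
          ∏ i : Fin k, (diagBlock C i.succ + diagBlock D i.succ).det / (diagBlock C i.succ).det
        ≤ (diagBlock C 0 + diagBlock D 0).det / (diagBlock C 0).det * (W.det / S.det) :=
          mul_le_mul_of_nonneg_left (le_trans hstep1 hstep2) hr0
      _ = (C + D).det / C.det := by
          have e0 : diagBlock C 0 + diagBlock D 0 = A + D₁ := rfl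
          have e0' : diagBlock C 0 = A := rfl
          rw [e0, e0', div_mul_div_comm, ← hdetCD, ← hdetC]

end MaticAux


/-- Matic's first inequality in the block setting: for `C` positive definite and `D`
block diagonal positive semidefinite, `∏ i, det(Cᵢ + Dᵢ)/det(Cᵢ) ≤ det(C + D)/det C`,
all the matrices `Cᵢ`, `Cᵢ + Dᵢ` and `C + D` being positive definite (so that the
determinants involved are positive reals). -/
theorem matic_det_inequality_one {k : ℕ} {n : Fin k → ℕ} (hn : ∀ i, 0 < n i)
    {C D : Matrix ((i : Fin k) × Fin (n i)) ((i : Fin k) × Fin (n i)) ℂ}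
    (hC : C.PosDef) (hD : D.PosSemidef) (hDbd : IsBlockDiagonal D) :
    (∀ i, (diagBlock C i).PosDef) ∧ (C + D).PosDef ∧
      (∀ i, (diagBlock C i + diagBlock D i).PosDef) ∧
      ∏ i, (diagBlock C i + diagBlock D i).det / (diagBlock C i).det
        ≤ (C + D).det / C.det := by
  have hblk : ∀ i, (diagBlock C i).PosDef := fun i =>
    MaticAux.posDef_submatrix_inj hC
      (fun a => (⟨i, a⟩ : (j : Fin k) × Fin (n j)))
      (sigma_mk_injective (β := fun j => Fin (n j)) (i := i))
  have hDblk : ∀ i, (diagBlock D i).PosSemidef := fun i =>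
    hD.submatrix (fun a => (⟨i, a⟩ : (j : Fin k) × Fin (n j)))
  exact ⟨hblk, hC.add_posSemidef hD,
    fun i => (hblk i).add_posSemidef (hDblk i),
    MaticAux.key k n C D hC hD hDbd⟩
end

section
/- In the block setting, let C : Matrix J J ℂ be positive definite and let D : Matrix J J ℂ be block diagonal and positive definite, with principal diagonal blocks C_i and D_i respectively. Then equality ∏_{i} det(C_i + D_i)/det(C_i) = det(C + D)/det(C) holds if and only if C is block diagonal. -/
open scoped ComplexOrder

open Matrix

open scoped MatrixOrder

set_option linter.unusedSectionVars false
set_option maxHeartbeats 800000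
variable {m : Type*} [Fintype m] [DecidableEq m]

lemma det_im_zero {M : Matrix m m ℂ} (hM : M.IsHermitian) : M.det.im = 0 := by
  have : star M.det = M.det := by rw [← det_conjTranspose, hM.eq]
  rw [← Complex.conj_eq_iff_im]; exact this

lemma det_eq_re {M : Matrix m m ℂ} (hM : M.IsHermitian) : M.det = (M.det.re : ℂ) := by
  exact Complex.ext rfl (by simp [det_im_zero hM])

lemma det_re_pos {M : Matrix m m ℂ} (hM : M.PosDef) : 0 < M.det.re := by
  have := hM.det_pos
  rw [Complex.lt_def] at this
  simpa using this.1

lemma mul_re_real {z w : ℂ} (hz : z.im = 0) (hw : w.im = 0) : (z*w).re = z.re * w.re := by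
  simp [Complex.mul_re, hz, hw]

/-- congruence of PosDef by an invertible matrix -/
lemma posDef_conj {Q : Matrix m m ℂ} (hQ : Q.PosDef) (W : Matrix m m ℂ) [Invertible W] :
    (Wᴴ * Q * W).PosDef := by
  refine Matrix.PosDef.of_dotProduct_mulVec_pos ?_ (fun x hx => ?_)
  · have h := hQ.1
    unfold Matrix.IsHermitian at *
    simp [Matrix.mul_assoc, h]
  · have hWx : W *ᵥ x ≠ 0 := fun h => hx (mulVec_injective_of_invertible W (h.trans (mulVec_zero W).symm))
    have := hQ.dotProduct_mulVec_pos hWx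
    have e : star x ⬝ᵥ (Wᴴ * Q * W) *ᵥ x = star (W *ᵥ x) ⬝ᵥ Q *ᵥ W *ᵥ x := by
      rw [← mulVec_mulVec, ← mulVec_mulVec, dotProduct_mulVec (star x) Wᴴ, ← star_mulVec]
    rwa [e]

lemma one_le_prodR {f : m → ℝ} (h : ∀ i, 1 ≤ f i) : (1:ℝ) ≤ ∏ i, f i := by
  calc (1:ℝ) = ∏ _i : m, 1 := by simp
  _ ≤ ∏ i, f i := Finset.prod_le_prod (by simp) (fun i _ => h i)

lemma prodR_eq_one {f : m → ℝ} (h : ∀ i, 1 ≤ f i) (h1 : ∏ i, f i = 1) : ∀ j, f j = 1 := by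
  intro j
  have h2 : 1 ≤ ∏ i ∈ Finset.univ.erase j, f i := by
    calc (1:ℝ) = ∏ _i ∈ Finset.univ.erase j, 1 := by simp
    _ ≤ _ := Finset.prod_le_prod (by simp) (fun i _ => h i)
  have h3 : f j * ∏ i ∈ Finset.univ.erase j, f i = 1 := by
    rw [Finset.mul_prod_erase _ _ (Finset.mem_univ j)]; exact h1
  nlinarith [h j]

/-- for PSD M, det (1+M) is a real number ≥ 1, equal to 1 iff M = 0 -/
lemma det_one_add_psd_s4 {M : Matrix m m ℂ} (hM : M.PosSemidef) :
    ∃ r : ℝ, 1 ≤ r ∧ (1 + M).det = (r : ℂ) ∧ (r = 1 → M = 0) := by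
  have hMh := hM.1
  set U : Matrix m m ℂ := (hMh.eigenvectorUnitary : Matrix m m ℂ)
  have hU : U * star U = 1 := (Matrix.mem_unitaryGroup_iff).mp hMh.eigenvectorUnitary.2
  have hsp : M = U * Matrix.diagonal (RCLike.ofReal ∘ hMh.eigenvalues) * star U :=
    hMh.spectral_theorem
  have key : (1 : Matrix m m ℂ) + M
      = U * (1 + Matrix.diagonal (RCLike.ofReal ∘ hMh.eigenvalues)) * star U := by
    rw [Matrix.mul_add, Matrix.add_mul, Matrix.mul_one, hU, ← hsp]
  refine ⟨∏ i, (1 + hMh.eigenvalues i), ?_, ?_, ?_⟩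
  · exact one_le_prodR (fun i => by linarith [hM.eigenvalues_nonneg i])
  · rw [key, det_mul, det_mul, mul_comm ((U : Matrix m m ℂ).det), mul_assoc, ← det_mul, hU,
      det_one, mul_one]
    have : (1 : Matrix m m ℂ) + Matrix.diagonal (RCLike.ofReal ∘ hMh.eigenvalues)
        = Matrix.diagonal (fun i => (1 : ℂ) + (hMh.eigenvalues i : ℝ)) := by
      rw [← Matrix.diagonal_one, Matrix.diagonal_add]
      rfl
    rw [this, det_diagonal]
    push_cast
    rfl
  · intro hr
    have hz := prodR_eq_one (fun i => by linarith [hM.eigenvalues_nonneg i]) hr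
    have : Matrix.diagonal (RCLike.ofReal ∘ hMh.eigenvalues) = (0 : Matrix m m ℂ) := by
      have : ∀ i, hMh.eigenvalues i = 0 := fun i => by linarith [hz i]
      ext i j
      by_cases h : i = j <;> simp [Matrix.diagonal, h, this]
    rw [hsp, this]
    simp

/-- key lemma: adding a PSD matrix to a PD matrix increases the determinant,
with equality iff the PSD matrix is zero. -/
lemma det_add_psd {P Q : Matrix m m ℂ} (hP : P.PosDef) (hQ : Q.PosSemidef) :
    P.det.re ≤ (P + Q).det.re ∧ ((P + Q).det = P.det → Q = 0) := by
  set S := CFC.sqrt P with hSdef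
  have hS2 : S * S = P := CFC.sqrt_mul_sqrt_self P hP.posSemidef.nonneg
  have hSh : S.IsHermitian := (CFC.sqrt_nonneg P).posSemidef.1
  have hSdet : IsUnit S.det := by
    have : S.det * S.det = P.det := by rw [← det_mul, hS2]
    have hPd := hP.det_pos.ne'
    exact isUnit_iff_ne_zero.mpr (fun h => hPd (by rw [← this, h, mul_zero]))
  haveI : Invertible S := (Matrix.isUnit_iff_isUnit_det S |>.mpr hSdet).invertible
  have hSinv : S * S⁻¹ = 1 := Matrix.mul_nonsing_inv S hSdet
  have hSinv' : S⁻¹ * S = 1 := Matrix.nonsing_inv_mul S hSdet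
  set M := S⁻¹ * Q * S⁻¹ with hMdef
  have hMpsd : M.PosSemidef := by
    have : M = (S⁻¹)ᴴ * Q * S⁻¹ := by
      rw [conjTranspose_nonsing_inv, hSh.eq]
    rw [this]; exact hQ.conjTranspose_mul_mul_same _
  have key : P + Q = S * (1 + M) * S := by
    rw [Matrix.mul_add, Matrix.add_mul, Matrix.mul_one, hS2, hMdef]
    congr 1
    symm
    calc S * (S⁻¹ * Q * S⁻¹) * S = (S * S⁻¹) * Q * (S⁻¹ * S) := by
          simp only [Matrix.mul_assoc]
    _ = Q := by rw [hSinv, hSinv', Matrix.one_mul, Matrix.mul_one]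
  obtain ⟨r, hr1, hrdet, hr0⟩ := det_one_add_psd_s4 hMpsd
  have hdet : (P + Q).det = P.det * r := by
    rw [key, det_mul, det_mul, hrdet, ← hS2, det_mul]
    ring
  constructor
  · rw [hdet, mul_re_real (det_im_zero hP.1) (by simp)]
    simp only [Complex.ofReal_re]
    nlinarith [det_re_pos hP]
  · intro h
    rw [hdet] at h
    have hr : r = 1 := by
      have hne := hP.det_pos.ne'
      have : P.det * r = P.det * 1 := by rw [mul_one]; exact h
      exact_mod_cast mul_left_cancel₀ hne this
    have hM0 : M = 0 := hr0 hr
    have : P + Q = P := by rw [key, hM0, add_zero, Matrix.mul_one, hS2]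
    have := congrArg (fun X => X - P) this
    simpa [add_sub_cancel_left] using this

/-- helper giving the sqrt of a PosDef matrix together with invertibility facts -/
lemma exists_sqrt {P : Matrix m m ℂ} (hP : P.PosDef) :
    ∃ S : Matrix m m ℂ, S * S = P ∧ S.IsHermitian ∧ IsUnit S.det := by
  refine ⟨CFC.sqrt P, CFC.sqrt_mul_sqrt_self P hP.posSemidef.nonneg,
    (CFC.sqrt_nonneg P).posSemidef.1, ?_⟩
  have : (CFC.sqrt P).det * (CFC.sqrt P).det = P.det := by
    rw [← det_mul, CFC.sqrt_mul_sqrt_self P hP.posSemidef.nonneg]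
  have hPd := hP.det_pos.ne'
  exact isUnit_iff_ne_zero.mpr (fun h => hPd (by rw [← this, h, mul_zero]))

/-- if `P` is PD and `P - 1` is PSD then `1 - P⁻¹` is PSD; strict version too. -/
lemma one_sub_inv_psd {P : Matrix m m ℂ} (hP : P.PosDef) :
    ((P - 1).PosSemidef → (1 - P⁻¹).PosSemidef) ∧ ((P - 1).PosDef → (1 - P⁻¹).PosDef) := by
  obtain ⟨S, hS2, hSh, hSdet⟩ := exists_sqrt hP
  haveI : Invertible S := (Matrix.isUnit_iff_isUnit_det S |>.mpr hSdet).invertible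
  haveI : Invertible P := hP.isUnit.invertible
  haveI : Invertible P⁻¹ := hP.inv.isUnit.invertible
  have hPinv : P * P⁻¹ = 1 := Matrix.mul_inv_of_invertible P
  have hPinv' : P⁻¹ * P = 1 := Matrix.inv_mul_of_invertible P
  set W := S * P⁻¹ with hWdef
  have hW : Wᴴ = P⁻¹ * S := by
    rw [hWdef, conjTranspose_mul, conjTranspose_nonsing_inv, hP.1.eq, hSh.eq]
  have key : Wᴴ * (P - 1) * W = 1 - P⁻¹ := by
    rw [hW, hWdef]
    have e0 : P⁻¹ * S * (P - 1) * (S * P⁻¹) = P⁻¹ * (S * P * S) * P⁻¹ - P⁻¹ * (S * S) * P⁻¹ := by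
      simp only [Matrix.mul_sub, Matrix.sub_mul, Matrix.mul_one, Matrix.one_mul, Matrix.mul_assoc]
    rw [e0]
    have h1 : S * P * S = P * P := by rw [← hS2]; simp only [Matrix.mul_assoc]
    rw [h1, hS2]
    have e1 : P⁻¹ * (P * P) * P⁻¹ = 1 := by
      calc P⁻¹ * (P * P) * P⁻¹ = (P⁻¹ * P) * (P * P⁻¹) := by simp only [Matrix.mul_assoc]
      _ = 1 := by rw [hPinv, hPinv', Matrix.one_mul]
    have e2 : P⁻¹ * P * P⁻¹ = P⁻¹ := by rw [hPinv', Matrix.one_mul]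
    rw [e1, e2]
  constructor
  · intro h
    have := h.conjTranspose_mul_mul_same W
    rwa [key] at this
  · intro h
    haveI : Invertible W := ((isUnit_of_invertible S).mul (isUnit_of_invertible P⁻¹)).invertible
    have := posDef_conj h W
    rwa [key] at this

/-- antitonicity of matrix inverse on PD matrices -/
lemma inv_sub_inv_psd {P Q : Matrix m m ℂ} (hP : P.PosDef) (hQ : Q.PosDef) :
    ((Q - P).PosSemidef → (P⁻¹ - Q⁻¹).PosSemidef) ∧ ((Q - P).PosDef → (P⁻¹ - Q⁻¹).PosDef) := by
  obtain ⟨T, hT2, hTh, hTdet⟩ := exists_sqrt hP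
  haveI : Invertible T := (Matrix.isUnit_iff_isUnit_det T |>.mpr hTdet).invertible
  have hTinv : T * T⁻¹ = 1 := Matrix.mul_inv_of_invertible T
  have hTinv' : T⁻¹ * T = 1 := Matrix.inv_mul_of_invertible T
  haveI : Invertible T⁻¹ := ⟨T, hTinv, hTinv'⟩
  have hTih : (T⁻¹).IsHermitian := hTh.inv
  set Q' := T⁻¹ * Q * T⁻¹ with hQ'def
  have hQ'pd : Q'.PosDef := by
    have := posDef_conj hQ T⁻¹
    rwa [hTih.eq] at this
  have hPinv2 : T⁻¹ * T⁻¹ = P⁻¹ := by rw [← hT2, Matrix.mul_inv_rev]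
  have hTPT : T⁻¹ * P * T⁻¹ = 1 := by
    rw [← hT2]
    calc T⁻¹ * (T * T) * T⁻¹ = (T⁻¹ * T) * (T * T⁻¹) := by simp only [Matrix.mul_assoc]
    _ = 1 := by rw [hTinv, hTinv', Matrix.one_mul]
  have hQ'1 : Q' - 1 = T⁻¹ * (Q - P) * T⁻¹ := by
    rw [hQ'def, ← hTPT]
    simp only [Matrix.mul_sub, Matrix.sub_mul]
  have hQ'inv : Q'⁻¹ = T * Q⁻¹ * T := by
    rw [hQ'def, Matrix.mul_inv_rev, Matrix.mul_inv_rev, Matrix.nonsing_inv_nonsing_inv T hTdet,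
      Matrix.mul_assoc]
  have key : ∀ X : Matrix m m ℂ, T⁻¹ * (1 - X) * T⁻¹ = P⁻¹ - T⁻¹ * X * T⁻¹ := by
    intro X
    rw [← hPinv2]
    simp only [Matrix.mul_sub, Matrix.sub_mul, Matrix.mul_one, Matrix.one_mul]
  have keyQ : T⁻¹ * Q'⁻¹ * T⁻¹ = Q⁻¹ := by
    rw [hQ'inv]
    calc T⁻¹ * (T * Q⁻¹ * T) * T⁻¹ = (T⁻¹ * T) * Q⁻¹ * (T * T⁻¹) := by
          simp only [Matrix.mul_assoc]
    _ = Q⁻¹ := by rw [hTinv, hTinv', Matrix.one_mul, Matrix.mul_one]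
  constructor
  · intro h
    have h1 : (Q' - 1).PosSemidef := by
      rw [hQ'1]
      nth_rewrite 1 [← hTih.eq]
      exact h.conjTranspose_mul_mul_same _
    have h2 := (one_sub_inv_psd hQ'pd).1 h1
    have h3 := h2.conjTranspose_mul_mul_same T⁻¹
    rwa [hTih.eq, key, keyQ] at h3
  · intro h
    have h1 : (Q' - 1).PosDef := by
      have := posDef_conj h T⁻¹
      rwa [hTih.eq, ← hQ'1] at this
    have h2 := (one_sub_inv_psd hQ'pd).2 h1
    have h3 := posDef_conj h2 T⁻¹
    rwa [hTih.eq, key, keyQ] at h3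

lemma det_one_add_add_psd {X Y : Matrix m m ℂ} (hX : X.PosSemidef) (hY : Y.PosSemidef) :
    (1 + X + Y).det.re ≤ (1 + X).det.re * (1 + Y).det.re := by
  have h1X : ((1 : Matrix m m ℂ) + X).PosDef := Matrix.PosDef.one.add_posSemidef hX
  haveI : Invertible ((1 : Matrix m m ℂ) + X) := h1X.isUnit.invertible
  set R := CFC.sqrt Y with hRdef
  have hR2 : R * R = Y := CFC.sqrt_mul_sqrt_self Y hY.nonneg
  have hRh : R.IsHermitian := (CFC.sqrt_nonneg Y).posSemidef.1
  have factor : (1 : Matrix m m ℂ) + X + Y = (1 + X) * (1 + (1+X)⁻¹ * Y) := by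
    rw [Matrix.mul_add, Matrix.mul_one, ← Matrix.mul_assoc, Matrix.mul_inv_of_invertible,
      Matrix.one_mul]
  set M := R * (1+X)⁻¹ * R with hMdef
  have comm : ((1 : Matrix m m ℂ) + (1+X)⁻¹ * Y).det = (1 + M).det := by
    have e : ((1:Matrix m m ℂ)+X)⁻¹ * Y = ((1+X)⁻¹ * R) * R := by
      rw [Matrix.mul_assoc, hR2]
    rw [e, det_one_add_mul_comm, hMdef, Matrix.mul_assoc]
  have hMpsd : M.PosSemidef := by
    rw [hMdef]
    nth_rewrite 1 [← hRh.eq]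
    exact h1X.inv.posSemidef.conjTranspose_mul_mul_same _
  have hYM : (Y - M).PosSemidef := by
    have e : Y - M = Rᴴ * (1 - (1+X)⁻¹) * R := by
      rw [hRh.eq, Matrix.mul_sub, Matrix.sub_mul, Matrix.mul_one, hR2, hMdef]
    rw [e]
    refine PosSemidef.conjTranspose_mul_mul_same ?_ R
    exact (one_sub_inv_psd h1X).1 (by simpa using hX)
  have h1M : ((1 : Matrix m m ℂ) + M).PosDef := Matrix.PosDef.one.add_posSemidef hMpsd
  have hsum : (1 : Matrix m m ℂ) + M + (Y - M) = 1 + Y := by abel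
  have ineq := (det_add_psd h1M hYM).1
  rw [hsum] at ineq
  have detfac : ((1:Matrix m m ℂ) + X + Y).det = (1+X).det * (1 + M).det := by
    rw [factor, det_mul, comm]
  rw [detfac, mul_re_real (det_im_zero h1X.1) (det_im_zero h1M.1)]
  have := det_re_pos h1X
  nlinarith

lemma det_submodular {F G X : Matrix m m ℂ} (hF : F.PosDef) (hG : G.PosSemidef)
    (hX : X.PosSemidef) :
    F.det.re * (F + X + G).det.re ≤ (F + X).det.re * (F + G).det.re := by
  obtain ⟨T, hT2, hTh, hTdet⟩ := exists_sqrt hF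
  haveI : Invertible T := (Matrix.isUnit_iff_isUnit_det T |>.mpr hTdet).invertible
  have hTinv : T * T⁻¹ = 1 := Matrix.mul_inv_of_invertible T
  have hTinv' : T⁻¹ * T = 1 := Matrix.inv_mul_of_invertible T
  have hTih : (T⁻¹).IsHermitian := hTh.inv
  have hconj : ∀ {Z : Matrix m m ℂ}, Z.PosSemidef → (T⁻¹ * Z * T⁻¹).PosSemidef := by
    intro Z hZ
    nth_rewrite 1 [← hTih.eq]
    exact hZ.conjTranspose_mul_mul_same _
  have fact : ∀ Z : Matrix m m ℂ, F + Z = T * (1 + T⁻¹ * Z * T⁻¹) * T := by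
    intro Z
    rw [Matrix.mul_add, Matrix.add_mul, Matrix.mul_one, hT2]
    congr 1
    symm
    calc T * (T⁻¹ * Z * T⁻¹) * T = (T * T⁻¹) * Z * (T⁻¹ * T) := by simp only [Matrix.mul_assoc]
    _ = Z := by rw [hTinv, hTinv', Matrix.one_mul, Matrix.mul_one]
  have detfact : ∀ {Z : Matrix m m ℂ}, Z.PosSemidef →
      (F + Z).det.re = F.det.re * (1 + T⁻¹ * Z * T⁻¹).det.re := by
    intro Z hZ
    have h1Z : ((1 : Matrix m m ℂ) + T⁻¹ * Z * T⁻¹).PosDef :=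
      Matrix.PosDef.one.add_posSemidef (hconj hZ)
    have : (F + Z).det = F.det * (1 + T⁻¹ * Z * T⁻¹).det := by
      rw [fact Z, det_mul, det_mul, ← hT2, det_mul]
      ring
    rw [this, mul_re_real (det_im_zero hF.1) (det_im_zero h1Z.1)]
  have eXG : T⁻¹ * (X + G) * T⁻¹ = T⁻¹ * X * T⁻¹ + T⁻¹ * G * T⁻¹ := by
    simp only [Matrix.mul_add, Matrix.add_mul]
  have key := det_one_add_add_psd (hconj hX) (hconj hG)
  have e1 := detfact hX
  have e2 := detfact hG
  have e3 := detfact (hX.add hG)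
  rw [add_assoc, e3, eXG, ← add_assoc]
  rw [e1, e2]
  have hf := det_re_pos hF
  nlinarith [mul_le_mul_of_nonneg_left key (le_of_lt (mul_pos hf hf))]

lemma posDef_submatrix {l : Type*} [Fintype l] [DecidableEq l] {M : Matrix m m ℂ}
    (hM : M.PosDef) {e : l → m} (he : Function.Injective e) :
    (M.submatrix e e).PosDef := by
  classical
  refine Matrix.PosDef.of_dotProduct_mulVec_pos (hM.1.submatrix e) (fun x hx => ?_)
  set y : m → ℂ := fun i => if h : ∃ a, e a = i then x h.choose else 0 with hy
  have hye : ∀ a, y (e a) = x a := by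
    intro a
    have h : ∃ b, e b = e a := ⟨a, rfl⟩
    simp only [hy, dif_pos h]
    exact congrArg x (he h.choose_spec)
  have hy0 : ∀ i, (¬ ∃ a, e a = i) → y i = 0 := fun i h => by simp [hy, dif_neg h]
  have hyne : y ≠ 0 := by
    obtain ⟨a, ha⟩ := Function.ne_iff.mp hx
    exact Function.ne_iff.mpr ⟨e a, by rw [hye]; simpa using ha⟩
  have sum_range : ∀ f : m → ℂ, (∀ i, (¬ ∃ a, e a = i) → f i = 0) →
      ∑ i, f i = ∑ a, f (e a) := by
    intro f hf
    calc ∑ i, f i = ∑ j ∈ Finset.univ.map ⟨e, he⟩, f j := by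
          symm
          apply Finset.sum_subset (Finset.subset_univ _)
          intro j _ hj
          apply hf
          rintro ⟨a, rfl⟩
          exact hj (Finset.mem_map.mpr ⟨a, Finset.mem_univ a, rfl⟩)
    _ = ∑ a, f (e a) := Finset.sum_map _ _ _
  have key : star x ⬝ᵥ (M.submatrix e e) *ᵥ x = star y ⬝ᵥ M *ᵥ y := by
    simp only [dotProduct, mulVec, Pi.star_apply, submatrix_apply]
    rw [sum_range _ (fun i hi => by rw [hy0 i hi]; simp)]
    apply Finset.sum_congr rfl
    intro a _
    rw [hye]
    congr 1
    rw [sum_range _ (fun j hj => by rw [hy0 j hj]; simp)]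
    apply Finset.sum_congr rfl
    intro b _
    rw [hye]
  rw [key]
  exact hM.dotProduct_mulVec_pos hyne

lemma schur_posDef {n' : Type*} [Fintype n'] [DecidableEq n']
    {A : Matrix m m ℂ} {B : Matrix m n' ℂ} {D : Matrix n' n' ℂ} (hA : A.PosDef) [Invertible A]
    (h : (fromBlocks A B Bᴴ D).PosDef) : (D - Bᴴ * A⁻¹ * B).PosDef := by
  refine Matrix.PosDef.of_dotProduct_mulVec_pos ((Matrix.IsHermitian.fromBlocks₁₁ B D hA.1).mp h.1) (fun x hx => ?_)
  have hv : (Sum.elim (-((A⁻¹ * B) *ᵥ x)) x) ≠ 0 := by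
    intro h0
    apply hx
    funext i
    simpa using congrFun h0 (Sum.inr i)
  have h2 := h.dotProduct_mulVec_pos hv
  rw [dotProduct_mulVec, schur_complement_eq₁₁ B D _ _ hA.1, neg_add_cancel, star_zero,
    zero_vecMul, zero_dotProduct, zero_add] at h2
  rwa [dotProduct_mulVec]

lemma conj_eq_zero {l : Type*} [Fintype l] [DecidableEq l] {Z : Matrix m m ℂ} (hZ : Z.PosDef)
    {B : Matrix m l ℂ} (h : Bᴴ * Z * B = 0) : B = 0 := by
  have hvec : ∀ u : l → ℂ, B *ᵥ u = 0 := by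
    intro u
    by_contra hu
    have hpos := hZ.dotProduct_mulVec_pos hu
    have e : star u ⬝ᵥ (Bᴴ * Z * B) *ᵥ u = star (B *ᵥ u) ⬝ᵥ Z *ᵥ (B *ᵥ u) := by
      rw [← mulVec_mulVec, ← mulVec_mulVec, dotProduct_mulVec (star u) Bᴴ, ← star_mulVec]
    rw [h] at e
    simp only [zero_mulVec, dotProduct_zero] at e
    rw [← e] at hpos
    exact lt_irrefl _ hpos
  ext i j
  have := congrFun (hvec (Pi.single j 1)) i
  simpa [mulVec, dotProduct, Pi.single_apply, mul_ite] using this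

def splitEquiv {k : ℕ} (n : Fin (k+1) → ℕ) :
    ((i : Fin (k+1)) × Fin (n i)) ≃ (Fin (n 0) ⊕ ((i : Fin k) × Fin (n i.succ))) where
  toFun p := Fin.cases (motive := fun i => Fin (n i) →
      (Fin (n 0) ⊕ ((i : Fin k) × Fin (n i.succ))))
    (fun a => Sum.inl a) (fun j a => Sum.inr ⟨j, a⟩) p.1 p.2
  invFun s := Sum.elim (fun a => ⟨0, a⟩) (fun q => ⟨q.1.succ, q.2⟩) s
  left_inv := by
    rintro ⟨i, a⟩
    induction i using Fin.cases with
    | zero => rfl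
    | succ j => rfl
  right_inv := by rintro (a | q) <;> rfl

lemma splitEquiv_symm_inl {k : ℕ} (n : Fin (k+1) → ℕ) (a : Fin (n 0)) :
    (splitEquiv n).symm (Sum.inl a) = ⟨0, a⟩ := rfl

lemma splitEquiv_symm_inr {k : ℕ} (n : Fin (k+1) → ℕ) (q : (i : Fin k) × Fin (n i.succ)) :
    (splitEquiv n).symm (Sum.inr q) = ⟨q.1.succ, q.2⟩ := rfl

lemma diagBlock_posDef {k : ℕ} {n : Fin k → ℕ}
    {C : Matrix ((i : Fin k) × Fin (n i)) ((i : Fin k) × Fin (n i)) ℂ} (hC : C.PosDef)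
    (i : Fin k) : (diagBlock C i).PosDef := by
  have h : (C.submatrix (fun a : Fin (n i) => (⟨i, a⟩ : (j : Fin k) × Fin (n j)))
      (fun a : Fin (n i) => (⟨i, a⟩ : (j : Fin k) × Fin (n j)))).PosDef :=
    posDef_submatrix hC (fun a b hab => by simpa using hab)
  exact h

theorem matic_aux : ∀ (k : ℕ) (n : Fin k → ℕ)
    (C D : Matrix ((i : Fin k) × Fin (n i)) ((i : Fin k) × Fin (n i)) ℂ),
    C.PosDef → D.PosDef → IsBlockDiagonal D →
    (C.det.re * ∏ i, (diagBlock C i + diagBlock D i).det.re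
        ≤ (C + D).det.re * ∏ i, (diagBlock C i).det.re)
    ∧ ((C + D).det.re * ∏ i, (diagBlock C i).det.re
        = C.det.re * ∏ i, (diagBlock C i + diagBlock D i).det.re ↔ IsBlockDiagonal C) := by
  intro k
  induction k with
  | zero =>
    intro n C D hC hD hDbd
    haveI : IsEmpty ((i : Fin 0) × Fin (n i)) := ⟨fun p => p.1.elim0⟩
    constructor
    · simp [Matrix.det_isEmpty]
    · constructor
      · intro _ p _ _; exact p.1.elim0
      · intro _; simp [Matrix.det_isEmpty]
  | succ k IH =>
    intro n C D hC hD hDbd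
    set e := splitEquiv n with he
    set A : Matrix (Fin (n 0)) (Fin (n 0)) ℂ := diagBlock C 0 with hAdef
    set D₁ : Matrix (Fin (n 0)) (Fin (n 0)) ℂ := diagBlock D 0 with hD₁def
    set B : Matrix (Fin (n 0)) ((i : Fin k) × Fin (n i.succ)) ℂ :=
      fun a q => C ⟨0, a⟩ ⟨q.1.succ, q.2⟩ with hBdef
    set E : Matrix ((i : Fin k) × Fin (n i.succ)) ((i : Fin k) × Fin (n i.succ)) ℂ :=
      fun p q => C ⟨p.1.succ, p.2⟩ ⟨q.1.succ, q.2⟩ with hEdef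
    set D₂ : Matrix ((i : Fin k) × Fin (n i.succ)) ((i : Fin k) × Fin (n i.succ)) ℂ :=
      fun p q => D ⟨p.1.succ, p.2⟩ ⟨q.1.succ, q.2⟩ with hD₂def
    -- block decompositions
    have hCsub : C.submatrix e.symm e.symm = fromBlocks A B Bᴴ E := by
      ext p q
      cases p with
      | inl a => cases q with
        | inl b => rfl
        | inr qq => rfl
      | inr pp => cases q with
        | inl b => exact (hC.1.apply _ _).symm
        | inr qq => rfl
    have hDsub : D.submatrix e.symm e.symm = fromBlocks D₁ 0 0 D₂ := by
      ext p q
      cases p with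
      | inl a => cases q with
        | inl b => rfl
        | inr qq => exact hDbd _ _ (Ne.symm (Fin.succ_ne_zero qq.1))
      | inr pp => cases q with
        | inl b => exact hDbd _ _ (Fin.succ_ne_zero pp.1)
        | inr qq => rfl
    -- positive definiteness of the pieces
    have hA : A.PosDef := diagBlock_posDef hC 0
    have hD₁ : D₁.PosDef := diagBlock_posDef hD 0
    have hE : E.PosDef := by
      have h : (C.submatrix
          (fun p : (i : Fin k) × Fin (n i.succ) => (⟨p.1.succ, p.2⟩ : (i : Fin (k+1)) × Fin (n i)))
          (fun p : (i : Fin k) × Fin (n i.succ) =>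
            (⟨p.1.succ, p.2⟩ : (i : Fin (k+1)) × Fin (n i)))).PosDef :=
        posDef_submatrix hC (by
          rintro ⟨i, a⟩ ⟨j, b⟩ hab
          have h2 : i = j := Fin.succ_injective _ (congrArg Sigma.fst hab)
          subst h2
          have h3 : a = b := by simpa using hab
          simp [h3])
      exact h
    have hD₂ : D₂.PosDef := by
      have h : (D.submatrix
          (fun p : (i : Fin k) × Fin (n i.succ) => (⟨p.1.succ, p.2⟩ : (i : Fin (k+1)) × Fin (n i)))
          (fun p : (i : Fin k) × Fin (n i.succ) =>
            (⟨p.1.succ, p.2⟩ : (i : Fin (k+1)) × Fin (n i)))).PosDef :=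
        posDef_submatrix hD (by
          rintro ⟨i, a⟩ ⟨j, b⟩ hab
          have h2 : i = j := Fin.succ_injective _ (congrArg Sigma.fst hab)
          subst h2
          have h3 : a = b := by simpa using hab
          simp [h3])
      exact h
    have hD₂bd : IsBlockDiagonal D₂ := by
      intro p q hpq
      exact hDbd _ _ (fun h => hpq (Fin.succ_injective _ h))
    have hAD : (A + D₁).PosDef := hA.add hD₁
    haveI : Invertible A := hA.isUnit.invertible
    haveI : Invertible (A + D₁) := hAD.isUnit.invertible
    set X : Matrix ((i : Fin k) × Fin (n i.succ)) ((i : Fin k) × Fin (n i.succ)) ℂ :=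
      Bᴴ * A⁻¹ * B with hXdef
    set Y : Matrix ((i : Fin k) × Fin (n i.succ)) ((i : Fin k) × Fin (n i.succ)) ℂ :=
      Bᴴ * (A + D₁)⁻¹ * B with hYdef
    -- determinant factorizations
    have hCdet : C.det = A.det * (E - X).det := by
      rw [← det_submatrix_equiv_self e.symm C, hCsub, det_fromBlocks₁₁, invOf_eq_nonsing_inv]
    have hCDsub : (C + D).submatrix e.symm e.symm = fromBlocks (A + D₁) B Bᴴ (E + D₂) := by
      have : (C + D).submatrix e.symm e.symm
          = C.submatrix e.symm e.symm + D.submatrix e.symm e.symm := rfl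
      rw [this, hCsub, hDsub, fromBlocks_add]
      congr 1 <;> simp
    have hCDdet : (C + D).det = (A + D₁).det * (E + D₂ - Y).det := by
      rw [← det_submatrix_equiv_self e.symm (C + D), hCDsub, det_fromBlocks₁₁, invOf_eq_nonsing_inv]
    -- Schur complements are PD
    have hfbC : (fromBlocks A B Bᴴ E).PosDef := by
      rw [← hCsub]
      exact posDef_submatrix hC e.symm.injective
    have hEX : (E - X).PosDef := schur_posDef hA hfbC
    have hfbCD : (fromBlocks (A + D₁) B Bᴴ (E + D₂)).PosDef := by
      rw [← hCDsub]
      exact posDef_submatrix (hC.add hD) e.symm.injective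
    have hEDY : (E + D₂ - Y).PosDef := schur_posDef hAD hfbCD
    have hXpsd : X.PosSemidef := hA.inv.posSemidef.conjTranspose_mul_mul_same B
    have hYpsd : Y.PosSemidef := hAD.inv.posSemidef.conjTranspose_mul_mul_same B
    have hZ : (A⁻¹ - (A + D₁)⁻¹).PosDef := by
      refine (inv_sub_inv_psd hA hAD).2 ?_
      have : A + D₁ - A = D₁ := by abel
      rw [this]; exact hD₁
    have hXY : (X - Y).PosSemidef := by
      have hxy : X - Y = Bᴴ * (A⁻¹ - (A + D₁)⁻¹) * B := by
        rw [hXdef, hYdef, Matrix.mul_sub, Matrix.sub_mul]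
      rw [hxy]
      exact hZ.posSemidef.conjTranspose_mul_mul_same B
    have hEDX : (E + D₂ - X).PosDef := by
      have : E + D₂ - X = (E - X) + D₂ := by abel
      rw [this]; exact hEX.add hD₂
    -- the induction hypothesis
    obtain ⟨IH1, IH2⟩ := IH (fun i => n i.succ) E D₂ hE hD₂ hD₂bd
    -- real quantities
    set a := A.det.re
    set a' := (A + D₁).det.re
    set xx := (E - X).det.re
    set yy := (E + D₂ - Y).det.re
    set yy' := (E + D₂ - X).det.re
    set eE := E.det.re
    set eED := (E + D₂).det.re
    set pp := ∏ i, (diagBlock E i).det.re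
    set qq := ∏ i, (diagBlock E i + diagBlock D₂ i).det.re
    have hCre : C.det.re = a * xx := by
      rw [hCdet, mul_re_real (det_im_zero hA.1) (det_im_zero hEX.1)]
    have hCDre : (C + D).det.re = a' * yy := by
      rw [hCDdet, mul_re_real (det_im_zero hAD.1) (det_im_zero hEDY.1)]
    have hprodC : ∏ i, (diagBlock C i).det.re = a * pp := by
      rw [Fin.prod_univ_succ]
      rfl
    have hprodCD : ∏ i, (diagBlock C i + diagBlock D i).det.re = a' * qq := by
      rw [Fin.prod_univ_succ]
      rfl
    -- positivity
    have ha : 0 < a := det_re_pos hA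
    have ha' : 0 < a' := det_re_pos hAD
    have hxx : 0 < xx := det_re_pos hEX
    have hyy : 0 < yy := det_re_pos hEDY
    have hyy' : 0 < yy' := det_re_pos hEDX
    have heE : 0 < eE := det_re_pos hE
    have heED : 0 < eED := det_re_pos (hE.add hD₂)
    have hpp : 0 < pp := Finset.prod_pos (fun i _ => det_re_pos (diagBlock_posDef hE i))
    have hqq : 0 < qq := Finset.prod_pos (fun i _ => by
      have : diagBlock E i + diagBlock D₂ i = diagBlock (E + D₂) i := rfl
      rw [this]
      exact det_re_pos (diagBlock_posDef (hE.add hD₂) i))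
    -- the chain of inequalities
    have i1 : yy' ≤ yy := by
      have hsum : (E + D₂ - X) + (X - Y) = E + D₂ - Y := by abel
      have := (det_add_psd hEDX hXY).1
      rwa [hsum] at this
    have i2 : xx * eED ≤ eE * yy' := by
      have h := det_submodular hEX hD₂.posSemidef hXpsd
      have e1 : (E - X) + X = E := by abel
      have e2 : (E - X) + X + D₂ = E + D₂ := by abel
      have e3 : (E - X) + D₂ = E + D₂ - X := by abel
      rwa [e2, e1, e3] at h
    have i3 : eE * qq ≤ eED * pp := IH1
    -- main inequality: xx * qq ≤ yy * pp
    have t1 : xx * (eE * qq) ≤ xx * (eED * pp) := by nlinarith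
    have t2 : xx * (eED * pp) ≤ (eE * yy') * pp := by nlinarith
    have t3 : (eE * yy') * pp ≤ (eE * yy) * pp := by nlinarith [mul_le_mul_of_nonneg_right (mul_le_mul_of_nonneg_left i1 heE.le) hpp.le]
    have main : xx * qq ≤ yy * pp := by nlinarith
    rw [hCre, hCDre, hprodC, hprodCD]
    constructor
    · nlinarith [mul_le_mul_of_nonneg_left main (le_of_lt (mul_pos ha ha'))]
    · constructor
      · -- equality implies block diagonal
        intro heq
        have hyppxq : yy * pp = xx * qq := by
          have h : (a * a') * (yy * pp) = (a * a') * (xx * qq) := by linear_combination heq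
          exact mul_left_cancel₀ (by positivity) h
        have teq : xx * (eE * qq) = (eE * yy) * pp := by linear_combination (-eE) * hyppxq
        have s3 : (eE * yy') * pp = (eE * yy) * pp := le_antisymm t3 (by linarith)
        have e1 : yy' = yy := by
          have := mul_right_cancel₀ (ne_of_gt hpp) s3
          exact mul_left_cancel₀ (ne_of_gt heE) this
        have s1 : xx * (eE * qq) = xx * (eED * pp) := le_antisymm t1 (by linarith)
        have e2 : eED * pp = eE * qq := by
          have := mul_left_cancel₀ (ne_of_gt hxx) s1
          linarith
        have hB0 : B = 0 := by
          have hdet_eq : (E + D₂ - X + (X - Y)).det = (E + D₂ - X).det := by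
            have hsum : (E + D₂ - X) + (X - Y) = E + D₂ - Y := by abel
            rw [hsum]
            exact (det_eq_re hEDY.1).trans
              ((congrArg Complex.ofReal e1.symm).trans (det_eq_re hEDX.1).symm)
          have hXY0 : X - Y = 0 := (det_add_psd hEDX hXY).2 hdet_eq
          have hxy : X - Y = Bᴴ * (A⁻¹ - (A + D₁)⁻¹) * B := by
            rw [hXdef, hYdef, Matrix.mul_sub, Matrix.sub_mul]
          exact conj_eq_zero hZ (by rw [← hxy, hXY0])
        have hEbd : IsBlockDiagonal E := IH2.mp e2
        intro p q hpq
        obtain ⟨i, pa⟩ := p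
        obtain ⟨j, qa⟩ := q
        induction i using Fin.cases with
        | zero =>
          induction j using Fin.cases with
          | zero => exact absurd rfl hpq
          | succ j' => exact congrFun (congrFun hB0 pa) ⟨j', qa⟩
        | succ i' =>
          induction j using Fin.cases with
          | zero =>
            rw [← hC.1.apply]
            have hz : C ⟨0, qa⟩ ⟨Fin.succ i', pa⟩ = 0 := congrFun (congrFun hB0 qa) ⟨i', pa⟩
            rw [hz]
            simp
          | succ j' =>
            have hij : i' ≠ j' := fun h => hpq (by simp [h])
            exact hEbd ⟨i', pa⟩ ⟨j', qa⟩ (by simpa using hij)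
      · -- block diagonal implies equality
        intro hCbd
        have hB0 : B = 0 := by
          ext a0 q0
          exact hCbd ⟨0, a0⟩ ⟨q0.1.succ, q0.2⟩ (Ne.symm (Fin.succ_ne_zero q0.1))
        have hEbd : IsBlockDiagonal E :=
          fun p q hpq => hCbd _ _ (fun h => hpq (Fin.succ_injective _ h))
        have hX0 : X = 0 := by rw [hXdef, hB0]; simp
        have hY0 : Y = 0 := by rw [hYdef, hB0]; simp
        have hxxeq : xx = eE := by
          have hEXE : E - X = E := by rw [hX0]; exact sub_zero E
          show (E - X).det.re = E.det.re
          rw [hEXE]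
        have hyyeq : yy = eED := by
          have hEDYE : E + D₂ - Y = E + D₂ := by rw [hY0]; exact sub_zero _
          show (E + D₂ - Y).det.re = (E + D₂).det.re
          rw [hEDYE]
        have h := IH2.mpr hEbd
        rw [hxxeq, hyyeq]
        linear_combination (a * a') * h


/-- Equality case in Matic's first inequality: for `C` positive definite and `D` block
diagonal positive definite, `∏ i, det(Cᵢ + Dᵢ)/det(Cᵢ) = det(C + D)/det C` holds iff
`C` is block diagonal. -/
theorem matic_det_inequality_one_eq_iff {k : ℕ} {n : Fin k → ℕ} (hn : ∀ i, 0 < n i)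
    {C D : Matrix ((i : Fin k) × Fin (n i)) ((i : Fin k) × Fin (n i)) ℂ}
    (hC : C.PosDef) (hD : D.PosDef) (hDbd : IsBlockDiagonal D) :
    ∏ i, (diagBlock C i + diagBlock D i).det / (diagBlock C i).det
        = (C + D).det / C.det ↔ IsBlockDiagonal C := by
  have hCD : (C + D).PosDef := hC.add hD
  have hbC : ∀ i, (diagBlock C i).PosDef := diagBlock_posDef hC
  have hbCD : ∀ i, (diagBlock C i + diagBlock D i).PosDef := fun i => by
    have h : diagBlock C i + diagBlock D i = diagBlock (C + D) i := rfl
    rw [h]; exact diagBlock_posDef hCD i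
  rw [Finset.prod_div_distrib,
    div_eq_div_iff (Finset.prod_ne_zero_iff.mpr fun i _ => (hbC i).det_pos.ne')
      hC.det_pos.ne']
  have h1 : ∏ i, (diagBlock C i + diagBlock D i).det
      = ((∏ i, (diagBlock C i + diagBlock D i).det.re : ℝ) : ℂ) := by
    rw [Complex.ofReal_prod]
    exact Finset.prod_congr rfl fun i _ => det_eq_re (hbCD i).1
  have h2 : ∏ i, (diagBlock C i).det = ((∏ i, (diagBlock C i).det.re : ℝ) : ℂ) := by
    rw [Complex.ofReal_prod]
    exact Finset.prod_congr rfl fun i _ => det_eq_re (hbC i).1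
  have key := (matic_aux k n C D hC hD hDbd).2
  rw [h1, h2, det_eq_re hC.1, det_eq_re hCD.1, ← Complex.ofReal_mul, ← Complex.ofReal_mul,
    Complex.ofReal_inj, ← key]
  exact ⟨fun h => by linear_combination -h, fun h => by linear_combination -h⟩
end

section
/- Let 𝔄 be a unital C*-algebra and ρ a state on 𝔄. Let f be a continuous convex real-valued function on a real interval [a, b], and let A ∈ 𝔄 be self-adjoint with spectrum contained in [a, b]. Then ρ(A) is a real number lying in [a, b] and f(ρ(A)) ≤ ρ(f(A)), where f(A) is defined by the continuous functional calculus (and ρ(f(A)) is real since f(A) is self-adjoint). -/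
open scoped ComplexOrder

/-- Approximate affine minorant of a convex function touching within `ε` at a point. -/
lemma jensen_affine_aux {a b : ℝ} {f : ℝ → ℝ} (hf_cont : ContinuousOn f (Set.Icc a b))
    (hf_conv : ConvexOn ℝ (Set.Icc a b) f) {x₀ : ℝ} (hx₀ : x₀ ∈ Set.Icc a b)
    {ε : ℝ} (hε : 0 < ε) :
    ∃ c d : ℝ, (∀ t ∈ Set.Icc a b, c * t + d ≤ f t) ∧ f x₀ - ε ≤ c * x₀ + d := by
  by_cases hab : b ≤ a
  · refine ⟨0, f x₀ - ε, fun t ht => ?_, by simp⟩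
    have h1 : t = a := le_antisymm (ht.2.trans hab) ht.1
    have h2 : x₀ = a := le_antisymm (hx₀.2.trans hab) hx₀.1
    rw [h1, ← h2]; linarith
  push_neg at hab
  have hc := hf_cont x₀ hx₀
  rw [Metric.continuousWithinAt_iff] at hc
  obtain ⟨δ, hδ, hδ'⟩ := hc (ε / 2) (by linarith)
  obtain ⟨v, hv_mem, hv_ne, hv_close⟩ :
      ∃ v, v ∈ Set.Icc a b ∧ v ≠ x₀ ∧ |v - x₀| < δ := by
    rcases lt_or_ge x₀ b with hxb | hxb
    · refine ⟨min b (x₀ + δ / 2), ⟨le_min (by linarith [hx₀.1]) (by linarith [hx₀.1]),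
        min_le_left _ _⟩, (lt_min hxb (by linarith)).ne', ?_⟩
      have h1 : x₀ < min b (x₀ + δ / 2) := lt_min hxb (by linarith)
      have h2 : min b (x₀ + δ / 2) ≤ x₀ + δ / 2 := min_le_right _ _
      rw [abs_of_pos (by linarith)]; linarith
    · have hx0b : x₀ = b := le_antisymm hx₀.2 hxb
      refine ⟨max a (x₀ - δ / 2), ⟨le_max_left _ _,
        max_le (by linarith) (by linarith [hx₀.2])⟩, ?_, ?_⟩
      · have h1 : max a (x₀ - δ / 2) < x₀ := max_lt (by rw [hx0b]; exact hab) (by linarith)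
        exact h1.ne
      · have h1 : max a (x₀ - δ / 2) < x₀ := max_lt (by rw [hx0b]; exact hab) (by linarith)
        have h2 : x₀ - δ / 2 ≤ max a (x₀ - δ / 2) := le_max_right _ _
        rw [abs_of_neg (by linarith)]; linarith
  set s := (f v - f x₀) / (v - x₀) with hs
  refine ⟨s, f x₀ - ε - s * x₀, fun t ht => ?_, le_of_eq (by ring)⟩
  have expand : s * t + (f x₀ - ε - s * x₀) = s * (t - x₀) + f x₀ - ε := by ring
  have hsv : s * (v - x₀) = f v - f x₀ := div_mul_cancel₀ _ (sub_ne_zero.2 hv_ne)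
  rcases le_or_gt |t - x₀| |v - x₀| with hclose | hfar
  · have h1 : |f t - f x₀| < ε / 2 := by
      have := hδ' ht (by rw [Real.dist_eq]; exact lt_of_le_of_lt hclose hv_close)
      rwa [Real.dist_eq] at this
    have h2 : s * (t - x₀) ≤ ε / 2 := by
      calc s * (t - x₀) ≤ |s * (t - x₀)| := le_abs_self _
        _ = |s| * |t - x₀| := abs_mul _ _
        _ ≤ |s| * |v - x₀| := mul_le_mul_of_nonneg_left hclose (abs_nonneg s)
        _ = |s * (v - x₀)| := (abs_mul _ _).symm
        _ = |f v - f x₀| := by rw [hsv]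
        _ ≤ ε / 2 := by
            have := hδ' hv_mem (by rw [Real.dist_eq]; exact hv_close)
            rw [Real.dist_eq] at this; exact this.le
    have h3 := (abs_lt.mp h1).1
    linarith [expand]
  · have htne : t ≠ x₀ := by
      intro h
      rw [h, sub_self, abs_zero] at hfar
      exact absurd hfar (not_lt.2 (abs_nonneg _))
    rcases lt_or_gt_of_ne htne with hlt | hgt
    · have htv : t ≤ v := by
        have h4 : x₀ - v ≤ |v - x₀| := by rw [abs_sub_comm]; exact le_abs_self _
        have h5 : x₀ - t = |t - x₀| := by rw [abs_sub_comm, abs_of_pos (by linarith)]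
        linarith
      have hsec := hf_conv.secant_mono hx₀ ht hv_mem htne hv_ne htv
      rw [← hs, div_le_iff_of_neg (by linarith : t - x₀ < 0)] at hsec
      linarith [expand]
    · have hvt : v ≤ t := by
        have h4 : v - x₀ ≤ |v - x₀| := le_abs_self _
        have h5 : t - x₀ = |t - x₀| := (abs_of_pos (by linarith)).symm
        linarith
      have hsec := hf_conv.secant_mono hx₀ hv_mem ht hv_ne htne hvt
      rw [← hs, le_div_iff₀ (by linarith : (0:ℝ) < t - x₀)] at hsec
      linarith [expand]

/-- **Jensen's inequality for states on a unital C*-algebra.** If `ρ` is a state on a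
unital C*-algebra `𝔄`, `f` is a continuous convex function on `[a, b]`, and `A ∈ 𝔄` is
self-adjoint with spectrum contained in `[a, b]`, then `ρ A` is a real number lying in
`[a, b]`, `ρ (f A)` is real, and `f (ρ A) ≤ ρ (f A)`, where `f A := cfc f A` is given
by the continuous functional calculus. -/
theorem state_jensen_inequality {𝔄 : Type*} [CStarAlgebra 𝔄] [PartialOrder 𝔄]
    [StarOrderedRing 𝔄]
    (ρ : 𝔄 →ₗ[ℂ] ℂ) (hρ_pos : ∀ x : 𝔄, 0 ≤ x → 0 ≤ ρ x) (hρ_one : ρ 1 = 1)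
    {a b : ℝ} (f : ℝ → ℝ) (hf_cont : ContinuousOn f (Set.Icc a b))
    (hf_conv : ConvexOn ℝ (Set.Icc a b) f)
    {A : 𝔄} (hA : IsSelfAdjoint A) (hspec : spectrum ℝ A ⊆ Set.Icc a b) :
    (ρ A).im = 0 ∧ (ρ A).re ∈ Set.Icc a b ∧
      (ρ (cfc f A)).im = 0 ∧ f (ρ A).re ≤ (ρ (cfc f A)).re := by
  have hnt : Nontrivial 𝔄 := by
    refine nontrivial_of_ne 1 0 fun h => ?_
    rw [h, map_zero] at hρ_one
    exact one_ne_zero hρ_one.symm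
  have hmono : ∀ x y : 𝔄, x ≤ y → ρ x ≤ ρ y := by
    intro x y h
    have := hρ_pos (y - x) (sub_nonneg.2 h)
    rw [map_sub] at this
    exact sub_nonneg.mp this
  have hρ_alg : ∀ r : ℝ, ρ (algebraMap ℝ 𝔄 r) = (r : ℂ) := by
    intro r
    rw [IsScalarTower.algebraMap_apply ℝ ℂ 𝔄, Algebra.algebraMap_eq_smul_one, map_smul,
      hρ_one, smul_eq_mul, mul_one]
    simp
  have key_bound : ∀ (x : 𝔄), IsSelfAdjoint x → ∀ m M : ℝ,
      (∀ t ∈ spectrum ℝ x, t ∈ Set.Icc m M) →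
      (ρ x).im = 0 ∧ (ρ x).re ∈ Set.Icc m M := by
    intro x hx m M h
    have h1 : algebraMap ℝ 𝔄 m ≤ x := algebraMap_le_of_le_spectrum (fun t ht => (h t ht).1) hx
    have h2 : x ≤ algebraMap ℝ 𝔄 M := le_algebraMap_of_spectrum_le (fun t ht => (h t ht).2) hx
    have l1 := hmono _ _ h1
    have l2 := hmono _ _ h2
    rw [hρ_alg] at l1 l2
    rw [Complex.le_def] at l1 l2
    refine ⟨?_, l1.1, l2.1⟩
    have := l1.2
    simpa using this.symm
  obtain ⟨him, hre⟩ := key_bound A hA a b hspec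
  have hcont' : ContinuousOn f (spectrum ℝ A) := hf_cont.mono hspec
  have hfA_sa : IsSelfAdjoint (cfc f A) := cfc_predicate f A
  have hAne : (spectrum ℝ A).Nonempty := hA.spectrum_nonempty
  have hab : a ≤ b := by
    obtain ⟨t, ht⟩ := hAne
    have := hspec ht
    linarith [this.1, this.2]
  obtain ⟨tM, htM, hM⟩ := isCompact_Icc.exists_isMaxOn (Set.nonempty_Icc.2 hab) hf_cont
  obtain ⟨tm, htm, hm⟩ := isCompact_Icc.exists_isMinOn (Set.nonempty_Icc.2 hab) hf_cont
  have hspec_fA : ∀ t ∈ spectrum ℝ (cfc f A), t ∈ Set.Icc (f tm) (f tM) := by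
    intro t ht
    rw [cfc_map_spectrum f A hA hcont'] at ht
    obtain ⟨u, hu, rfl⟩ := ht
    exact ⟨hm (hspec hu), hM (hspec hu)⟩
  obtain ⟨him', _⟩ := key_bound (cfc f A) hfA_sa (f tm) (f tM) hspec_fA
  refine ⟨him, hre, him', ?_⟩
  have key : ∀ c d : ℝ, (∀ t ∈ Set.Icc a b, c * t + d ≤ f t) →
      c * (ρ A).re + d ≤ (ρ (cfc f A)).re := by
    intro c d hcd
    have h1 : cfc (fun t : ℝ => c * t + d) A ≤ cfc f A :=
      cfc_mono (fun t ht => hcd t (hspec ht)) (by fun_prop) hcont'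
    have h2 : cfc (fun t : ℝ => c * t + d) A = c • A + algebraMap ℝ 𝔄 d := by
      rw [cfc_add A (fun t => c * t) (fun _ => d) (by fun_prop) (by fun_prop),
        cfc_const_mul_id c A hA, cfc_const d A hA]
    rw [h2] at h1
    have h3 := hmono _ _ h1
    rw [map_add, hρ_alg, LinearMap.map_smul_of_tower] at h3
    rw [Complex.le_def] at h3
    have h4 := h3.1
    simpa [Complex.add_re, Complex.smul_re] using h4
  refine le_of_forall_pos_le_add fun ε hε => ?_
  obtain ⟨c, d, hmin, hval⟩ := jensen_affine_aux hf_cont hf_conv hre hε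
  have := key c d hmin
  linarith
end

section
/- Let 𝔄 be a unital C*-algebra and ρ a faithful state on 𝔄 (ρ(a* a) = 0 implies a = 0). Let f be a continuous strictly convex real-valued function on a real interval [a, b] (strictly convex meaning: f is convex, and f((x+y)/2) = (f(x)+f(y))/2 for x, y ∈ [a,b] forces x = y), and let A ∈ 𝔄 be self-adjoint with spectrum contained in [a, b]. Then f(ρ(A)) = ρ(f(A)) holds if and only if A = λ·1 for some real scalar λ ∈ [a, b]. -/
open scoped ComplexOrder

lemma exists_support_line {a b x₀ : ℝ} {f : ℝ → ℝ}
    (hf : ConvexOn ℝ (Set.Icc a b) f) (hx₀ : x₀ ∈ Set.Ioo a b) :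
    ∃ k : ℝ, ∀ t ∈ Set.Icc a b, f x₀ + k * (t - x₀) ≤ f t := by
  obtain ⟨ha, hb⟩ := hx₀
  set S : Set ℝ := (fun t => (f x₀ - f t) / (x₀ - t)) '' Set.Ico a x₀ with hS
  have hne : S.Nonempty := ⟨_, ⟨a, ⟨le_refl a, ha⟩, rfl⟩⟩
  have hbdd : BddAbove S := by
    refine ⟨(f b - f x₀) / (b - x₀), ?_⟩
    rintro y ⟨t, ⟨hta, htx⟩, rfl⟩
    exact hf.slope_mono_adjacent ⟨hta, le_of_lt (htx.trans hb)⟩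
      ⟨le_of_lt ((hta.trans_lt htx).trans hb), le_refl b⟩ htx hb
  refine ⟨sSup S, fun t ht => ?_⟩
  rcases lt_trichotomy t x₀ with h | h | h
  · have hts : (f x₀ - f t) / (x₀ - t) ≤ sSup S :=
      le_csSup hbdd ⟨t, ⟨ht.1, h⟩, rfl⟩
    have h2 : f x₀ - f t ≤ sSup S * (x₀ - t) :=
      (div_le_iff₀ (by linarith)).mp hts
    nlinarith [h2]
  · simp [h]
  · have hub : sSup S ≤ (f t - f x₀) / (t - x₀) := by
      refine csSup_le hne ?_
      rintro y ⟨s, ⟨hsa, hsx⟩, rfl⟩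
      exact hf.slope_mono_adjacent ⟨hsa, le_of_lt ((hsx.trans h).trans_le ht.2)⟩ ht hsx h
    have h2 : sSup S * (t - x₀) ≤ f t - f x₀ :=
      (le_div_iff₀ (by linarith)).mp hub
    linarith

/-- **Equality case of Jensen's inequality for faithful states.** If `ρ` is a faithful
state on a unital C*-algebra `𝔄`, `f` is a continuous strictly convex function on
`[a, b]`, and `A ∈ 𝔄` is self-adjoint with spectrum contained in `[a, b]`, then
`f (ρ A) = ρ (f A)` holds iff `A = λ • 1` for some real scalar `λ ∈ [a, b]`. -/
theorem state_jensen_eq_iff {𝔄 : Type*} [CStarAlgebra 𝔄] [PartialOrder 𝔄]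
    [StarOrderedRing 𝔄]
    (ρ : 𝔄 →ₗ[ℂ] ℂ) (hρ_pos : ∀ x : 𝔄, 0 ≤ x → 0 ≤ ρ x) (hρ_one : ρ 1 = 1)
    (hρ_faithful : ∀ x : 𝔄, ρ (star x * x) = 0 → x = 0)
    {a b : ℝ} (f : ℝ → ℝ) (hf_cont : ContinuousOn f (Set.Icc a b))
    (hf_conv : ConvexOn ℝ (Set.Icc a b) f)
    (hf_strict : ∀ x ∈ Set.Icc a b, ∀ y ∈ Set.Icc a b,
      f ((x + y) / 2) = (f x + f y) / 2 → x = y)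
    {A : 𝔄} (hA : IsSelfAdjoint A) (hspec : spectrum ℝ A ⊆ Set.Icc a b) :
    (f (ρ A).re : ℂ) = ρ (cfc f A) ↔
      ∃ c ∈ Set.Icc a b, A = (c : ℂ) • (1 : 𝔄) := by
  -- the algebra is nontrivial
  have hnt : Nontrivial 𝔄 := by
    refine ⟨1, 0, fun h => ?_⟩
    rw [h, map_zero] at hρ_one
    exact one_ne_zero hρ_one.symm
  -- real scalars embed as expected
  have halg : ∀ r : ℝ, algebraMap ℝ 𝔄 r = (r : ℂ) • (1 : 𝔄) := by
    intro r
    rw [IsScalarTower.algebraMap_apply ℝ ℂ 𝔄, Algebra.algebraMap_eq_smul_one,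
      Complex.coe_algebraMap]
  have hρalg : ∀ r : ℝ, ρ (algebraMap ℝ 𝔄 r) = (r : ℂ) := by
    intro r
    rw [halg, map_smul, hρ_one, smul_eq_mul, mul_one]
  -- faithfulness for nonnegative elements
  have key : ∀ x : 𝔄, 0 ≤ x → ρ x = 0 → x = 0 := by
    intro x hx hρx
    have hsa : IsSelfAdjoint (CFC.sqrt x) := IsSelfAdjoint.of_nonneg (CFC.sqrt_nonneg x)
    have hxx : star (CFC.sqrt x) * CFC.sqrt x = x := by
      rw [hsa.star_eq, CFC.sqrt_mul_sqrt_self x hx]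
    have : CFC.sqrt x = 0 := hρ_faithful _ (by rw [hxx]; exact hρx)
    rw [← hxx, this, mul_zero]
  have hcont : ContinuousOn f (spectrum ℝ A) := hf_cont.mono hspec
  constructor
  · intro h
    -- spectrum is nonempty
    obtain ⟨c₀, hc₀⟩ := hA.spectrum_nonempty
    -- A - a•1 and b•1 - A are nonnegative
    have hAa : 0 ≤ A - algebraMap ℝ 𝔄 a := by
      have := cfc_nonneg (f := fun t => t - a) (a := A)
        (fun x hx => sub_nonneg.mpr (hspec hx).1)
      rwa [cfc_sub _ _ _ (by fun_prop) (by fun_prop), cfc_id' ℝ A, cfc_const a A] at this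
    have hbA : 0 ≤ algebraMap ℝ 𝔄 b - A := by
      have := cfc_nonneg (f := fun t => b - t) (a := A)
        (fun x hx => sub_nonneg.mpr (hspec hx).2)
      rwa [cfc_sub _ _ _ (by fun_prop) (by fun_prop), cfc_id' ℝ A, cfc_const b A] at this
    -- ρ A is real, between a and b
    have h1 : 0 ≤ ρ A - (a : ℂ) := by
      have := hρ_pos _ hAa
      rwa [map_sub, hρalg] at this
    have h2 : 0 ≤ (b : ℂ) - ρ A := by
      have := hρ_pos _ hbA
      rwa [map_sub, hρalg] at this
    rw [Complex.le_def] at h1 h2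
    simp only [Complex.zero_re, Complex.zero_im, Complex.sub_re, Complex.sub_im,
      Complex.ofReal_re, Complex.ofReal_im] at h1 h2
    set x₀ : ℝ := (ρ A).re with hx₀def
    have hρA : ρ A = (x₀ : ℂ) := by
      apply Complex.ext <;> simp [hx₀def]
      linarith [h1.2]
    have hax₀ : a ≤ x₀ := by linarith [h1.1]
    have hx₀b : x₀ ≤ b := by linarith [h2.1]
    -- helper: if A = algebraMap r then done
    have finish : ∀ r : ℝ, r ∈ Set.Icc a b → A = algebraMap ℝ 𝔄 r →
        ∃ c ∈ Set.Icc a b, A = (c : ℂ) • (1 : 𝔄) := by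
      intro r hr hAr
      exact ⟨r, hr, by rw [hAr, halg]⟩
    rcases eq_or_lt_of_le hax₀ with hcase | hax₀'
    · -- x₀ = a : A - a•1 ≥ 0 with ρ = 0
      have hz : ρ (A - algebraMap ℝ 𝔄 a) = 0 := by
        rw [map_sub, hρalg, hρA, hcase, sub_self]
      have hA0 := key _ hAa hz
      exact finish a ⟨le_refl a, hax₀.trans hx₀b⟩ (sub_eq_zero.mp hA0)
    rcases eq_or_lt_of_le hx₀b with hcase | hx₀b'
    · -- x₀ = b
      have hz : ρ (algebraMap ℝ 𝔄 b - A) = 0 := by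
        rw [map_sub, hρalg, hρA, hcase, sub_self]
      have hb0 := key _ hbA hz
      exact finish b ⟨hax₀.trans hx₀b, le_refl b⟩ (sub_eq_zero.mp hb0).symm
    -- interior case
    obtain ⟨k, hk⟩ := exists_support_line hf_conv ⟨hax₀', hx₀b'⟩
    -- the gap function
    set g : ℝ → ℝ := fun t => f t - ((f x₀ - k * x₀) + k * t) with hgdef
    have hgcont : ContinuousOn g (spectrum ℝ A) := hcont.sub (by fun_prop)
    have hg0 : ∀ t ∈ spectrum ℝ A, 0 ≤ g t := by
      intro t ht
      have := hk t (hspec ht)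
      simp only [hgdef]
      linarith
    have hgA : 0 ≤ cfc g A := cfc_nonneg hg0
    -- cfc g A as a combination
    have hgAeq : cfc g A = cfc f A - (algebraMap ℝ 𝔄 (f x₀ - k * x₀) + k • A) := by
      rw [hgdef, cfc_sub _ _ _ hcont (by fun_prop),
        cfc_add _ _ _ (by fun_prop) (by fun_prop), cfc_const _ A,
        cfc_const_mul _ _ _ (by fun_prop), cfc_id' ℝ A]
    have hρg : ρ (cfc g A) = 0 := by
      rw [hgAeq, map_sub, map_add, hρalg, ρ.map_smul_of_tower, hρA, ← h,
        Complex.real_smul]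
      push_cast
      ring
    have hgzero : cfc g A = 0 := key _ hgA hρg
    -- g vanishes on the spectrum
    have hEqOn : ∀ t ∈ spectrum ℝ A, f t = f x₀ + k * (t - x₀) := by
      intro t ht
      have heqon : (spectrum ℝ A).EqOn g (fun _ => (0 : ℝ)) := by
        apply eqOn_of_cfc_eq_cfc (hf := hgcont) (hg := continuousOn_const)
        rw [hgzero, cfc_const 0 A hA, map_zero]
      have h0 := heqon ht
      simp only [hgdef] at h0
      linarith [sub_eq_zero.mp (by linarith [h0] : f t - ((f x₀ - k * x₀) + k * t) = 0)]
    -- spectrum is a singleton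
    have hsingle : ∀ t ∈ spectrum ℝ A, t = c₀ := by
      intro t ht
      have htI : t ∈ Set.Icc a b := hspec ht
      have hcI : c₀ ∈ Set.Icc a b := hspec hc₀
      have hmid : (t + c₀) / 2 ∈ Set.Icc a b := by
        constructor <;> [linarith [htI.1, hcI.1]; linarith [htI.2, hcI.2]]
      have hconv : f ((t + c₀) / 2) ≤ (f t + f c₀) / 2 := by
        have h2 := hf_conv.2 htI hcI (by norm_num : (0:ℝ) ≤ 1/2) (by norm_num : (0:ℝ) ≤ 1/2)
          (by norm_num)
        simp only [smul_eq_mul] at h2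
        have hmid' : (t + c₀) / 2 = 1/2 * t + 1/2 * c₀ := by ring
        rw [hmid']
        linarith [h2]
      have hsupp : f x₀ + k * ((t + c₀) / 2 - x₀) ≤ f ((t + c₀) / 2) := hk _ hmid
      have h1' := hEqOn t ht
      have h2' := hEqOn c₀ hc₀
      have heq : f ((t + c₀) / 2) = (f t + f c₀) / 2 := by
        apply le_antisymm hconv
        rw [h1', h2']
        linarith [hsupp]
      exact hf_strict t htI c₀ hcI heq
    have hAc : A = algebraMap ℝ 𝔄 c₀ := by
      conv_lhs => rw [← cfc_id ℝ A hA]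
      rw [show (id : ℝ → ℝ) = fun t => t from rfl]
      rw [← cfc_const c₀ A hA]
      exact cfc_congr fun t ht => hsingle t ht
    exact finish c₀ (hspec hc₀) hAc
  · rintro ⟨c, hc, rfl⟩
    have hAeq : ((c : ℂ) • (1 : 𝔄)) = algebraMap ℝ 𝔄 c := (halg c).symm
    rw [hAeq, cfc_algebraMap, hρalg, hρalg]
    norm_num
end

section
/- Let H be a complex Hilbert space, and let A, B, C be bounded linear operators on H such that A and C are positive (self-adjoint with ⟨A x, x⟩ ≥ 0 for all x, respectively for C) and A is invertible as a bounded operator. Let P be the bounded operator on the Hilbert space direct sum H ⊕ H defined by P(x, y) = (A x + B y, B* x + C y), where B* is the adjoint of B. Then P is a positive operator if and only if the Schur complement C − B* A⁻¹ B is a positive operator on H. -/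
open ContinuousLinearMap RCLike

local notation "⟪" x ", " y "⟫" => @inner ℂ _ _ x y

/-- **Schur complement criterion for positivity of a block operator.** Let `H` be a
complex Hilbert space and `A B C : H →L[ℂ] H` with `A`, `C` positive and `A` invertible.
If `P` is the bounded operator on the Hilbert space direct sum `H ⊕ H` given in block
form by `P (x, y) = (A x + B y, B* x + C y)`, then `P` is positive iff the Schur
complement `C - B* A⁻¹ B` is positive. -/
theorem schur_complement_isPositive_iff {H : Type*} [NormedAddCommGroup H]
    [InnerProductSpace ℂ H] [CompleteSpace H]
    (A B C : H →L[ℂ] H) (hA : A.IsPositive) (hC : C.IsPositive) (hAinv : IsUnit A)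
    (P : WithLp 2 (H × H) →L[ℂ] WithLp 2 (H × H))
    (hP : ∀ x y : H, P ((WithLp.equiv 2 (H × H)).symm (x, y)) =
      (WithLp.equiv 2 (H × H)).symm
        (A x + B y, ContinuousLinearMap.adjoint B x + C y)) :
    P.IsPositive ↔
      (C - ContinuousLinearMap.adjoint B * Ring.inverse A * B).IsPositive := by
  set A' : H →L[ℂ] H := Ring.inverse A with hA'def
  have hAA' : A * A' = 1 := Ring.mul_inverse_cancel A hAinv
  have hA'A : A' * A = 1 := Ring.inverse_mul_cancel A hAinv
  have hAsa : ContinuousLinearMap.adjoint A = A := hA.isSelfAdjoint.adjoint_eq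
  have hA'sa : ContinuousLinearMap.adjoint A' = A' := by
    have hAstar : star A = A := by rw [ContinuousLinearMap.star_eq_adjoint]; exact hAsa
    have h1 : star A' * A = 1 := by rw [← hAstar, ← star_mul, hAA', star_one]
    calc ContinuousLinearMap.adjoint A' = star A' * (A * A') := by
          rw [hAA', mul_one, ContinuousLinearMap.star_eq_adjoint]
      _ = (star A' * A) * A' := by rw [mul_assoc]
      _ = A' := by rw [h1, one_mul]
  have hAA'app : ∀ w : H, A (A' w) = w := fun w => by
    have := congrArg (fun T : H →L[ℂ] H => T w) hAA'
    simpa using this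
  have e1 : ∀ x y : H, ⟪A x, A' (B y)⟫ = ⟪ContinuousLinearMap.adjoint B x, y⟫ := by
    intro x y
    rw [← hAsa, ContinuousLinearMap.adjoint_inner_left, hAA'app,
      ContinuousLinearMap.adjoint_inner_left]
  have e2 : ∀ y : H, ⟪B y, A' (B y)⟫ =
      ⟪(ContinuousLinearMap.adjoint B * A' * B) y, y⟫ := by
    intro y
    rw [show (ContinuousLinearMap.adjoint B * A' * B) y
        = ContinuousLinearMap.adjoint B (A' (B y)) from rfl,
      ContinuousLinearMap.adjoint_inner_left, ← hA'sa,
      ContinuousLinearMap.adjoint_inner_left, hA'sa]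
  have key : ∀ x y : H,
      ⟪P ((WithLp.equiv 2 (H × H)).symm (x, y)), (WithLp.equiv 2 (H × H)).symm (x, y)⟫
        = ⟪A (x + A' (B y)), x + A' (B y)⟫
          + ⟪(C - ContinuousLinearMap.adjoint B * A' * B) y, y⟫ := by
    intro x y
    rw [hP x y]
    simp only [WithLp.prod_inner_apply, WithLp.equiv_symm_apply, WithLp.ofLp_toLp,
      map_add, ContinuousLinearMap.sub_apply, inner_add_left, inner_add_right,
      inner_sub_left, hAA'app]
    rw [e1 x y, e2 y]
    ring
  rw [ContinuousLinearMap.isPositive_iff_complex, ContinuousLinearMap.isPositive_iff_complex]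
  constructor
  · intro h y
    have := h ((WithLp.equiv 2 (H × H)).symm (-(A' (B y)), y))
    rw [key (-(A' (B y))) y] at this
    simpa [inner_sub_left] using this
  · intro h z
    have hz : z = (WithLp.equiv 2 (H × H)).symm (z.fst, z.snd) := rfl
    rw [hz, key z.fst z.snd]
    obtain ⟨ha1, ha2⟩ := (ContinuousLinearMap.isPositive_iff_complex A).mp hA
      (z.fst + A' (B z.snd))
    obtain ⟨hb1, hb2⟩ := h z.snd
    constructor
    · rw [map_add, Complex.ofReal_add, ha1, hb1]
    · rw [map_add]
      exact add_nonneg ha2 hb2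
end

section
/- In the block setting, let A : Matrix J J ℂ be Hermitian and let Φ denote the pinching. Then Φ(A)² ≤ Φ(A²) in the Loewner order (i.e. Φ(A²) − Φ(A)·Φ(A) is positive semidefinite), and equality Φ(A)² = Φ(A²) holds if and only if A is block diagonal (equivalently Φ(A) = A). -/
open scoped ComplexOrder
open scoped Matrix

lemma pinch_isHermitian {k : ℕ} {n : Fin k → ℕ}
    {M : Matrix ((i : Fin k) × Fin (n i)) ((i : Fin k) × Fin (n i)) ℂ}
    (hM : M.IsHermitian) : (pinch M).IsHermitian := by
  ext p q
  have h1 : (star (M q p)) = M p q := by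
    rw [← Matrix.conjTranspose_apply, hM]
  simp only [Matrix.conjTranspose_apply, pinch, apply_ite (star ·), star_zero, h1]
  rcases eq_or_ne p.1 q.1 with h | h
  · rw [if_pos h.symm, if_pos h]
  · rw [if_neg (Ne.symm h), if_neg h]

lemma pinch_posSemidef {k : ℕ} {n : Fin k → ℕ}
    {M : Matrix ((i : Fin k) × Fin (n i)) ((i : Fin k) × Fin (n i)) ℂ}
    (hM : M.PosSemidef) : (pinch M).PosSemidef := by
  refine Matrix.PosSemidef.of_dotProduct_mulVec_nonneg (pinch_isHermitian hM.1) fun x => ?_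
  set y : Fin k → ((i : Fin k) × Fin (n i)) → ℂ :=
    fun i p => if p.1 = i then x p else 0 with hy
  have step : ∀ p, (∑ i : Fin k, star (y i p) * (M *ᵥ y i) p)
      = star (x p) * (pinch M *ᵥ x) p := by
    intro p
    have h2 : ∀ i : Fin k, star (y i p) * (M *ᵥ y i) p
        = if p.1 = i then star (x p) * (M *ᵥ y i) p else 0 := by
      intro i
      by_cases h : p.1 = i <;> simp [hy, h]
    simp only [h2, Finset.sum_ite_eq, Finset.mem_univ, if_true]
    congr 1
    simp only [Matrix.mulVec, dotProduct, pinch, hy]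
    apply Finset.sum_congr rfl
    intro q _
    rcases eq_or_ne p.1 q.1 with h | h
    · rw [if_pos h.symm, if_pos h]
    · rw [if_neg (Ne.symm h), if_neg h, mul_zero, zero_mul]
  have key : dotProduct (star x) (pinch M *ᵥ x)
      = ∑ i : Fin k, dotProduct (star (y i)) (M *ᵥ (y i)) := by
    simp only [dotProduct, Pi.star_apply]
    rw [Finset.sum_comm]
    exact (Finset.sum_congr rfl fun p _ => step p).symm
  rw [key]
  exact Finset.sum_nonneg fun i _ => hM.dotProduct_mulVec_nonneg (y i)

/-- **Kadison–Schwarz inequality for the pinching.** For a Hermitian matrix `A` in the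
block setting, `Φ(A)² ≤ Φ(A²)` in the Loewner order, with equality iff `A` is block
diagonal (equivalently `Φ(A) = A`). -/
theorem pinch_sq_le_pinch_of_sq {k : ℕ} {n : Fin k → ℕ} (hn : ∀ i, 0 < n i)
    {A : Matrix ((i : Fin k) × Fin (n i)) ((i : Fin k) × Fin (n i)) ℂ}
    (hA : A.IsHermitian) :
    (pinch (A * A) - pinch A * pinch A).PosSemidef ∧
      (pinch A * pinch A = pinch (A * A) ↔ IsBlockDiagonal A) := by
  classical
  set P := pinch A with hP
  set D := A - P with hD
  have hDdiag : ∀ p q : (i : Fin k) × Fin (n i), p.1 = q.1 → D p q = 0 := by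
    intro p q h; simp [hD, hP, pinch, h, Matrix.sub_apply]
  have hDoff : ∀ p q : (i : Fin k) × Fin (n i), p.1 ≠ q.1 → D p q = A p q := by
    intro p q h; simp [hD, hP, pinch, h, Matrix.sub_apply]
  have hDherm : D.IsHermitian := hA.sub (pinch_isHermitian hA)
  have keyid : pinch (A * A) - P * P = pinch (D * D) := by
    ext p q
    simp only [Matrix.sub_apply, pinch, Matrix.mul_apply]
    rcases eq_or_ne p.1 q.1 with h | h
    · rw [if_pos h, if_pos h, ← Finset.sum_sub_distrib]
      apply Finset.sum_congr rfl
      intro r _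
      rcases eq_or_ne r.1 p.1 with hr | hr
      · have e1 : P p r = A p r := by simp [hP, pinch, hr.symm]
        have e2 : P r q = A r q := by simp [hP, pinch, hr.trans h]
        rw [e1, e2, hDdiag p r hr.symm, sub_self, zero_mul]
      · have e1 : P p r = 0 := if_neg fun hh => hr hh.symm
        rw [e1, zero_mul, sub_zero, hDoff p r (Ne.symm hr),
          hDoff r q (fun hh => hr (hh.trans h.symm))]
    · rw [if_neg h, if_neg h, zero_sub, neg_eq_zero]
      apply Finset.sum_eq_zero
      intro r _
      rcases eq_or_ne r.1 p.1 with hr | hr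
      · have e2 : P r q = 0 := by simp [hP, pinch, hr.trans_ne h]
        rw [e2, mul_zero]
      · have e1 : P p r = 0 := if_neg fun hh => hr hh.symm
        rw [e1, zero_mul]
  have hDDpsd : (D * D).PosSemidef := by
    have := Matrix.posSemidef_conjTranspose_mul_self D
    rwa [hDherm] at this
  have part1 : (pinch (A * A) - P * P).PosSemidef := by
    rw [keyid]; exact pinch_posSemidef hDDpsd
  refine ⟨part1, ?_, ?_⟩
  · -- equality → block diagonal
    intro heq p q hpq
    have hzero : pinch (D * D) = 0 := by
      rw [← keyid, heq, sub_self]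
    have hsum : (∑ r, D p r * D r p) = 0 := by
      have := congrFun (congrFun hzero p) p
      simpa [pinch, Matrix.mul_apply] using this
    have hterm : ∀ r, D p r * D r p = ((Complex.normSq (D p r) : ℝ) : ℂ) := by
      intro r
      have : D r p = starRingEnd ℂ (D p r) := by
        rw [← hDherm.apply r p]; rfl
      rw [this, Complex.mul_conj]
    rw [Finset.sum_congr rfl fun r _ => hterm r] at hsum
    have hsum' : (∑ r, Complex.normSq (D p r)) = 0 := by
      exact_mod_cast hsum
    have hall : Complex.normSq (D p q) = 0 := by
      have := (Finset.sum_eq_zero_iff_of_nonneg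
        (fun r _ => Complex.normSq_nonneg (D p r))).mp hsum' q (Finset.mem_univ q)
      exact this
    have : D p q = 0 := Complex.normSq_eq_zero.mp hall
    rw [← hDoff p q hpq]; exact this
  · -- block diagonal → equality
    intro hbd
    have hPA : P = A := by
      ext p q
      simp only [hP, pinch]
      rcases eq_or_ne p.1 q.1 with h | h
      · rw [if_pos h]
      · rw [if_neg h, hbd p q h]
    have hAA : pinch (A * A) = A * A := by
      ext p q
      simp only [pinch]
      rcases eq_or_ne p.1 q.1 with h | h
      · rw [if_pos h]
      · rw [if_neg h]
        symm
        rw [Matrix.mul_apply]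
        apply Finset.sum_eq_zero
        intro r _
        rcases eq_or_ne r.1 q.1 with hr | hr
        · rw [hbd p r (hr ▸ h), zero_mul]
        · rw [hbd r q hr, mul_zero]
    rw [hPA, hAA]
end
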